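/- arXiv:1108.3227 — 5 statements merged into one kernel-verified Lean document; each statement's English description precedes it below -/
import Mathlib

section
/- Let 0 < r₁ < r₂ and let f : ℂ → ℂ be holomorphic on the open annulus {ζ : r₁ < |ζ| < r₂}. Then there exist a unique function f₊ holomorphic on the disc {ζ : |ζ| < r₂} with f₊(0) = 0, a unique constant c₀ ∈ ℂ, and a unique function f₋ holomorphic on {ζ : |ζ| > r₁} with f₋(ζ) → 0 as |ζ| → ∞, such that f(ζ) = f₊(ζ) + c₀ + f₋(ζ) for all ζ in the annulus. Moreover, for every ρ with r₁ < ρ < r₂, c₀ = (2πi)⁻¹ ∮_{|s|=ρ} f(s)/s ds (circle integral over the circle of radius ρ centered at 0). -/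
/-!
For `r₁ < ρ' < ‖ζ‖ < ρ < r₂`, Cauchy's integral formula on the closed annulus between the circles
`|s| = ρ'` and `|s| = ρ` (Goursat applied to the difference quotient `dslope f ζ`) gives
`f ζ = (2πi)⁻¹ ∮_{|s|=ρ} f(s)/(s - ζ) ds - (2πi)⁻¹ ∮_{|s|=ρ'} f(s)/(s - ζ) ds`, and by Goursat
again neither integral depends on its radius. The outer integral is a Cauchy integral over a
circle enclosing `ζ`, hence holomorphic for `‖ζ‖ < r₂`. The substitution `s = t⁻¹` turns the
inner one into the outer integral of `t ↦ f t⁻¹` on the inverted annulus, evaluated at `ζ⁻¹`,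
minus its value at `0`; so it is holomorphic for `‖ζ‖ > r₁` and tends to `0` at infinity.
Splitting off the value of the outer integral at `0` gives the decomposition, with `c₀` the
Cauchy integral at `ζ = 0`.

For uniqueness, the difference of two decompositions gives a function holomorphic on the disc
that agrees on the annulus with one holomorphic outside the inner circle and vanishing at
infinity; together they form an entire function vanishing at infinity, zero by Liouville.
-/

open Filter Complex Real

/-- `IsAnnulusDecomp r₁ r₂ f fp c₀ fm` says that `fp + c₀ + fm` is a decomposition of
`f` on the annulus `{ζ : r₁ < |ζ| < r₂}` into a part `fp` holomorphic on the disc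
`{|ζ| < r₂}` vanishing at `0`, a constant `c₀`, and a part `fm` holomorphic on
`{r₁ < |ζ|}` tending to `0` as `|ζ| → ∞`. -/
def IsAnnulusDecomp (r₁ r₂ : ℝ) (f fp : ℂ → ℂ) (c₀ : ℂ) (fm : ℂ → ℂ) : Prop :=
  DifferentiableOn ℂ fp {ζ : ℂ | ‖ζ‖ < r₂} ∧ fp 0 = 0 ∧
  DifferentiableOn ℂ fm {ζ : ℂ | r₁ < ‖ζ‖} ∧
  Tendsto fm (Filter.comap (fun ζ : ℂ => ‖ζ‖) Filter.atTop) (nhds 0) ∧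
  ∀ ζ : ℂ, r₁ < ‖ζ‖ → ‖ζ‖ < r₂ → f ζ = fp ζ + c₀ + fm ζ

open Metric Set Bornology Topology

variable {E : Type*} [NormedAddCommGroup E] [NormedSpace ℂ E] {f : ℂ → E} {r₁ r₂ : ℝ}

def annulus (r₁ r₂ : ℝ) : Set ℂ := {ζ | r₁ < ‖ζ‖ ∧ ‖ζ‖ < r₂}

lemma isOpen_annulus (r₁ r₂ : ℝ) : IsOpen (annulus r₁ r₂) :=
  (isOpen_lt continuous_const continuous_norm).inter (isOpen_lt continuous_norm continuous_const)

lemma closedBall_diff_ball_subset_annulus {a b : ℝ} (ha : r₁ < a) (hb : b < r₂) :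
    closedBall (0 : ℂ) b \ ball 0 a ⊆ annulus r₁ r₂ := by
  rintro z ⟨hzb, hza⟩
  rw [mem_closedBall_zero_iff] at hzb
  rw [mem_ball_zero_iff, not_lt] at hza
  exact ⟨ha.trans_le hza, hzb.trans_lt hb⟩

lemma sphere_subset_annulus {ρ : ℝ} (h₁ : r₁ < ρ) (h₂ : ρ < r₂) :
    sphere (0 : ℂ) ρ ⊆ annulus r₁ r₂ := fun z hz => by
  rw [mem_sphere_zero_iff_norm] at hz
  exact ⟨hz ▸ h₁, hz ▸ h₂⟩

lemma DifferentiableOn.comp_inv_annulus (hr₂ : 0 < r₂) (hf : DifferentiableOn ℂ f (annulus r₁ r₂)) :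
    DifferentiableOn ℂ (fun t => f t⁻¹) (annulus r₂⁻¹ r₁⁻¹) := by
  have hpos : ∀ t ∈ annulus r₂⁻¹ r₁⁻¹, 0 < ‖t‖ := fun t ht => (inv_pos.2 hr₂).trans ht.1
  refine hf.comp (differentiableOn_inv.mono fun t ht => norm_pos_iff.1 (hpos t ht)) fun t ht => ?_
  refine ⟨?_, ?_⟩ <;> rw [norm_inv]
  · simpa using inv_strictAnti₀ (hpos t ht) ht.2
  · simpa using inv_strictAnti₀ (inv_pos.2 hr₂) ht.1

lemma circleIntegrable_sub_inv_smul {c w : ℂ} {R : ℝ} (hR : 0 ≤ R) (hw : w ∉ sphere c R)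
    (hf : ContinuousOn f (sphere c R)) : CircleIntegrable (fun z => (z - w)⁻¹ • f z) c R :=
  (((continuousOn_id.sub continuousOn_const).inv₀ fun _ hz =>
    sub_ne_zero.2 (ne_of_mem_of_not_mem hz hw)).smul hf).circleIntegrable hR

lemma circleIntegral_sub_inv_of_notMem_closedBall {c w : ℂ} {R : ℝ} (hR : 0 ≤ R)
    (hw : w ∉ closedBall c R) : (∮ z in C(c, R), (z - w)⁻¹) = 0 := by
  have hne : ∀ z ∈ closedBall c R, z - w ≠ 0 := fun z hz =>
    sub_ne_zero.2 (ne_of_mem_of_not_mem hz hw)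
  exact circleIntegral_eq_zero_of_differentiable_on_off_countable hR countable_empty
    ((continuousOn_id.sub continuousOn_const).inv₀ hne) fun z hz =>
      (differentiableAt_id.sub_const w).inv (hne z (ball_subset_closedBall hz.1))

lemma circleIntegral_sub_inv_smul_eq_of_le (hf : DifferentiableOn ℂ f (annulus r₁ r₂)) {ζ : ℂ}
    {a b : ℝ} (hr₁a : r₁ < a) (hζa : ‖ζ‖ < a) (hab : a ≤ b) (hb : b < r₂) :
    (∮ s in C(0, b), (s - ζ)⁻¹ • f s) = ∮ s in C(0, a), (s - ζ)⁻¹ • f s := by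
  have hsub := closedBall_diff_ball_subset_annulus hr₁a hb
  have hne : ∀ z ∈ closedBall (0 : ℂ) b \ ball 0 a, z - ζ ≠ 0 := by
    rintro z ⟨-, hz⟩
    rw [mem_ball_zero_iff, not_lt] at hz
    exact sub_ne_zero.2 (ne_of_apply_ne norm (hζa.trans_le hz).ne')
  refine circleIntegral_eq_of_differentiable_on_annulus_off_countable
    ((norm_nonneg ζ).trans_lt hζa) hab countable_empty
    (((continuousOn_id.sub continuousOn_const).inv₀ hne).smul (hf.continuousOn.mono hsub))
    fun z hz => ?_
  have hz' := sdiff_subset_sdiff ball_subset_closedBall ball_subset_closedBall hz.1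
  exact ((differentiableAt_id.sub_const ζ).inv (hne z hz')).smul
    (hf.differentiableAt ((isOpen_annulus r₁ r₂).mem_nhds (hsub hz')))

lemma circleIntegral_sub_inv_smul_eq (hf : DifferentiableOn ℂ f (annulus r₁ r₂)) {ζ : ℂ}
    {a b : ℝ} (ha : a ∈ Ioo (max r₁ ‖ζ‖) r₂) (hb : b ∈ Ioo (max r₁ ‖ζ‖) r₂) :
    (∮ s in C(0, a), (s - ζ)⁻¹ • f s) = ∮ s in C(0, b), (s - ζ)⁻¹ • f s := by
  rcases le_total a b with hab | hab
  · exact (circleIntegral_sub_inv_smul_eq_of_le hf (max_lt_iff.1 ha.1).1 (max_lt_iff.1 ha.1).2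
      hab hb.2).symm
  · exact circleIntegral_sub_inv_smul_eq_of_le hf (max_lt_iff.1 hb.1).1 (max_lt_iff.1 hb.1).2
      hab ha.2

/-- The radius `(max r₁ ‖ζ‖ + r₂) / 2` is only a choice: by
`circleIntegral_sub_inv_smul_eq` any radius in `(max r₁ ‖ζ‖, r₂)` gives the same value. -/
noncomputable def outerCauchyIntegral (r₁ r₂ : ℝ) (f : ℂ → E) (ζ : ℂ) : E :=
  (2 * π * I : ℂ)⁻¹ • ∮ s in C(0, (max r₁ ‖ζ‖ + r₂) / 2), (s - ζ)⁻¹ • f s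

lemma outerCauchyIntegral_eq (hf : DifferentiableOn ℂ f (annulus r₁ r₂)) {ζ : ℂ} {ρ : ℝ}
    (hρ : ρ ∈ Ioo (max r₁ ‖ζ‖) r₂) :
    outerCauchyIntegral r₁ r₂ f ζ = (2 * π * I : ℂ)⁻¹ • ∮ s in C(0, ρ), (s - ζ)⁻¹ • f s := by
  have hmid : (max r₁ ‖ζ‖ + r₂) / 2 ∈ Ioo (max r₁ ‖ζ‖) r₂ := by
    constructor <;> linarith [hρ.1, hρ.2]
  rw [outerCauchyIntegral, circleIntegral_sub_inv_smul_eq hf hmid hρ]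

lemma differentiableOn_outerCauchyIntegral [CompleteSpace E] (hr : r₁ < r₂)
    (hf : DifferentiableOn ℂ f (annulus r₁ r₂)) :
    DifferentiableOn ℂ (outerCauchyIntegral r₁ r₂ f) {ζ | ‖ζ‖ < r₂} := by
  intro ζ₀ hζ₀
  obtain ⟨ρ, hρ⟩ : (Ioo (max r₁ ‖ζ₀‖) r₂).Nonempty := nonempty_Ioo.2 (max_lt hr hζ₀)
  have hζ₀ρ : ‖ζ₀‖ < ρ := (le_max_right _ _).trans_lt hρ.1
  have hr₁ρ : r₁ < ρ := (le_max_left _ _).trans_lt hρ.1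
  have hρ₀ : 0 < ρ := (norm_nonneg ζ₀).trans_lt hζ₀ρ
  lift ρ to NNReal using hρ₀.le
  have hps := hasFPowerSeriesOn_cauchy_integral
    ((hf.continuousOn.mono (sphere_subset_annulus hr₁ρ hρ.2)).circleIntegrable ρ.coe_nonneg)
    (by exact_mod_cast hρ₀)
  have heq : outerCauchyIntegral r₁ r₂ f =ᶠ[𝓝 ζ₀]
      fun w => (2 * π * I : ℂ)⁻¹ • ∮ s in C(0, ρ), (s - w)⁻¹ • f s := by
    filter_upwards [isOpen_ball.mem_nhds (mem_ball_zero_iff.2 hζ₀ρ)] with w hw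
    exact outerCauchyIntegral_eq hf ⟨max_lt hr₁ρ (mem_ball_zero_iff.1 hw), hρ.2⟩
  refine (heq.differentiableAt_iff.2 ?_).differentiableWithinAt
  exact (hps.analyticAt_of_mem (by simpa [Metric.eball_coe] using hζ₀ρ)).differentiableAt

lemma circleIntegral_dslope_eq (hf : DifferentiableOn ℂ f (annulus r₁ r₂)) {ζ : ℂ}
    (hζ : ζ ∈ annulus r₁ r₂) {ρ' ρ : ℝ} (h₀ : 0 < ρ') (h₁ : r₁ < ρ') (h₂ : ρ' ≤ ρ) (h₃ : ρ < r₂) :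
    (∮ s in C(0, ρ), dslope f ζ s) = ∮ s in C(0, ρ'), dslope f ζ s := by
  have hsub := closedBall_diff_ball_subset_annulus h₁ h₃
  have hfd : ∀ z ∈ annulus r₁ r₂, DifferentiableAt ℂ f z := fun z hz =>
    hf.differentiableAt ((isOpen_annulus r₁ r₂).mem_nhds hz)
  refine circleIntegral_eq_of_differentiable_on_annulus_off_countable h₀ h₂
    (countable_singleton ζ) ?_ fun z hz => ?_
  · exact ((continuousOn_dslope ((isOpen_annulus r₁ r₂).mem_nhds hζ)).2
      ⟨hf.continuousOn, hfd ζ hζ⟩).mono hsub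
  · exact (differentiableAt_dslope_of_ne hz.2).2
      (hfd z (hsub (sdiff_subset_sdiff ball_subset_closedBall ball_subset_closedBall hz.1)))

lemma circleIntegral_dslope_eq_sub [CompleteSpace E] {c ζ : ℂ} {R : ℝ} (hR : 0 ≤ R)
    (hζ : ζ ∉ sphere c R) (hf : ContinuousOn f (sphere c R)) :
    (∮ z in C(c, R), dslope f ζ z) =
      (∮ z in C(c, R), (z - ζ)⁻¹ • f z) - (∮ z in C(c, R), (z - ζ)⁻¹) • f ζ := by
  rw [← circleIntegral.integral_smul_const, ← circleIntegral.integral_sub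
    (circleIntegrable_sub_inv_smul hR hζ hf)
    (circleIntegrable_sub_inv_smul hR hζ continuousOn_const)]
  refine circleIntegral.integral_congr hR fun z hz => ?_
  rw [dslope_of_ne _ (ne_of_mem_of_not_mem hz hζ), slope_def_module, smul_sub]

lemma circleIntegral_sub_inv_smul_sub_of_differentiableOn_annulus [CompleteSpace E]
    (hf : DifferentiableOn ℂ f (annulus r₁ r₂)) {ζ : ℂ} {ρ' ρ : ℝ} (h₀ : 0 < ρ') (h₁ : r₁ < ρ')
    (h₂ : ρ' < ‖ζ‖) (h₃ : ‖ζ‖ < ρ) (h₄ : ρ < r₂) :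
    (∮ s in C(0, ρ), (s - ζ)⁻¹ • f s) - (∮ s in C(0, ρ'), (s - ζ)⁻¹ • f s) =
      (2 * π * I : ℂ) • f ζ := by
  have key := circleIntegral_dslope_eq hf ⟨h₁.trans h₂, h₃.trans h₄⟩ h₀ h₁ (h₂.trans h₃).le h₄
  rw [circleIntegral_dslope_eq_sub (h₀.trans (h₂.trans h₃)).le
      (fun h => h₃.ne (mem_sphere_zero_iff_norm.1 h))
      (hf.continuousOn.mono (sphere_subset_annulus (h₁.trans (h₂.trans h₃)) h₄)),
    circleIntegral_dslope_eq_sub h₀.le (fun h => h₂.ne' (mem_sphere_zero_iff_norm.1 h))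
      (hf.continuousOn.mono (sphere_subset_annulus h₁ (h₂.trans (h₃.trans h₄)))),
    circleIntegral.integral_sub_inv_of_mem_ball (mem_ball_zero_iff.2 h₃),
    circleIntegral_sub_inv_of_notMem_closedBall h₀.le (by simpa using h₂), zero_smul, sub_zero,
    sub_eq_iff_eq_add] at key
  rw [key, add_sub_cancel_left]

/-- Substituting `s = t⁻¹`, the reversal of orientation cancels the sign of `ds = -t⁻² dt`. -/
theorem circleIntegral_comp_inv (F : ℂ → E) (R : ℝ) :
    (∮ t in C(0, R), (t ^ 2)⁻¹ • F t⁻¹) = ∮ s in C(0, R⁻¹), F s := by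
  set G : ℝ → E := fun θ => deriv (circleMap 0 R⁻¹) θ • F (circleMap 0 R⁻¹ θ)
  have hG : Function.Periodic G (2 * π) := fun θ => by
    simp only [G, deriv_circleMap, periodic_circleMap 0 R⁻¹ θ]
  have hpt : ∀ θ : ℝ, deriv (circleMap 0 R) θ • ((circleMap 0 R θ) ^ 2)⁻¹ •
      F (circleMap 0 R θ)⁻¹ = G (-θ) := fun θ => by
    simp only [G, deriv_circleMap, smul_smul, ← circleMap_zero_inv]
    congr 1
    rcases eq_or_ne (circleMap 0 R θ) 0 with h | h
    · simp [h]
    · field_simp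
  calc (∮ t in C(0, R), (t ^ 2)⁻¹ • F t⁻¹) = ∫ θ in 0..2 * π, G (-θ) :=
        intervalIntegral.integral_congr fun θ _ => hpt θ
    _ = ∫ θ in -(2 * π)..0, G θ := by rw [intervalIntegral.integral_comp_neg, neg_zero]
    _ = ∫ θ in 0..2 * π, G θ := by simpa using hG.intervalIntegral_add_eq (-(2 * π)) 0

lemma circleIntegral_sub_inv_smul_eq_comp_inv {ζ : ℂ} {ρ : ℝ} (hρ : 0 < ρ) (hζ : ρ < ‖ζ‖) :
    (∮ s in C(0, ρ), (s - ζ)⁻¹ • f s) = ∮ t in C(0, ρ⁻¹), (t⁻¹ - (t - ζ⁻¹)⁻¹) • f t⁻¹ := by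
  rw [← inv_inv ρ, ← circleIntegral_comp_inv, inv_inv]
  refine circleIntegral.integral_congr (inv_pos.2 hρ).le fun t ht => ?_
  rw [mem_sphere_zero_iff_norm] at ht
  have ht₀ : t ≠ 0 := norm_pos_iff.1 (ht ▸ inv_pos.2 hρ)
  have hζ₀ : ζ ≠ 0 := norm_pos_iff.1 (hρ.trans hζ)
  have htζ : ‖t * ζ‖ ≠ 1 := by
    rw [norm_mul, ht]
    exact ((one_lt_inv_mul₀ hρ).2 hζ).ne'
  have h₁ : 1 - t * ζ ≠ 0 := fun h => htζ (by rw [← sub_eq_zero.1 h, norm_one])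
  have h₂ : t * ζ - 1 ≠ 0 := fun h => h₁ (by linear_combination -h)
  simp only [smul_smul]
  congr 1
  field_simp
  ring

/-- Equals `-(2πi)⁻¹ ∮_{|s| = ρ'} (s - ζ)⁻¹ f(s) ds` (`innerCauchyIntegral_eq`); written through
`ζ ↦ ζ⁻¹` so that holomorphy and decay at infinity are inherited from `outerCauchyIntegral`. -/
noncomputable def innerCauchyIntegral (r₁ r₂ : ℝ) (f : ℂ → E) (ζ : ℂ) : E :=
  outerCauchyIntegral r₂⁻¹ r₁⁻¹ (fun t => f t⁻¹) ζ⁻¹ -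
    outerCauchyIntegral r₂⁻¹ r₁⁻¹ (fun t => f t⁻¹) 0

lemma innerCauchyIntegral_eq [CompleteSpace E] (hr₁ : 0 < r₁)
    (hf : DifferentiableOn ℂ f (annulus r₁ r₂)) {ζ : ℂ} {ρ' : ℝ} (h₁ : r₁ < ρ') (h₂ : ρ' < ‖ζ‖)
    (h₃ : ρ' < r₂) :
    innerCauchyIntegral r₁ r₂ f ζ = -((2 * π * I : ℂ)⁻¹ • ∮ s in C(0, ρ'), (s - ζ)⁻¹ • f s) := by
  have hρ' : 0 < ρ' := hr₁.trans h₁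
  have hg := hf.comp_inv_annulus (hρ'.trans h₃)
  have hρ'r₁ : ρ'⁻¹ < r₁⁻¹ := inv_strictAnti₀ hr₁ h₁
  have hr₂ρ' : r₂⁻¹ < ρ'⁻¹ := inv_strictAnti₀ hρ' h₃
  have hgc : ContinuousOn (fun t => f t⁻¹) (sphere 0 ρ'⁻¹) :=
    hg.continuousOn.mono (sphere_subset_annulus hr₂ρ' hρ'r₁)
  have hζ : ζ⁻¹ ∉ sphere (0 : ℂ) ρ'⁻¹ := fun h => by
    rw [mem_sphere_zero_iff_norm, norm_inv, inv_inj] at h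
    exact h₂.ne' h
  have h₀ : (0 : ℂ) ∉ sphere (0 : ℂ) ρ'⁻¹ := by simpa using hρ'.ne
  rw [innerCauchyIntegral, ← neg_sub, neg_inj,
    outerCauchyIntegral_eq hg (ρ := ρ'⁻¹) ⟨max_lt hr₂ρ' (by simpa using hρ'), hρ'r₁⟩,
    outerCauchyIntegral_eq hg (ρ := ρ'⁻¹)
      ⟨max_lt hr₂ρ' (by simpa using inv_strictAnti₀ hρ' h₂), hρ'r₁⟩,
    ← smul_sub, ← circleIntegral.integral_sub
      (circleIntegrable_sub_inv_smul (inv_pos.2 hρ').le h₀ hgc)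
      (circleIntegrable_sub_inv_smul (inv_pos.2 hρ').le hζ hgc),
    circleIntegral_sub_inv_smul_eq_comp_inv hρ' h₂]
  simp only [sub_zero, sub_smul]

lemma outerCauchyIntegral_add_innerCauchyIntegral [CompleteSpace E] (hr₁ : 0 < r₁)
    (hf : DifferentiableOn ℂ f (annulus r₁ r₂)) {ζ : ℂ} (hζ : ζ ∈ annulus r₁ r₂) :
    outerCauchyIntegral r₁ r₂ f ζ + innerCauchyIntegral r₁ r₂ f ζ = f ζ := by
  obtain ⟨ρ', hρ'⟩ := nonempty_Ioo.2 hζ.1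
  obtain ⟨ρ, hρ⟩ := nonempty_Ioo.2 hζ.2
  rw [outerCauchyIntegral_eq hf ⟨max_lt (hζ.1.trans hρ.1) hρ.1, hρ.2⟩,
    innerCauchyIntegral_eq hr₁ hf hρ'.1 hρ'.2 (hρ'.2.trans hζ.2), ← sub_eq_add_neg, ← smul_sub,
    circleIntegral_sub_inv_smul_sub_of_differentiableOn_annulus hf (hr₁.trans hρ'.1) hρ'.1 hρ'.2
      hρ.1 hρ.2, inv_smul_smul₀ two_pi_I_ne_zero]

lemma differentiableOn_innerCauchyIntegral [CompleteSpace E] (hr₁ : 0 < r₁) (hr : r₁ < r₂)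
    (hf : DifferentiableOn ℂ f (annulus r₁ r₂)) :
    DifferentiableOn ℂ (innerCauchyIntegral r₁ r₂ f) {ζ | r₁ < ‖ζ‖} := by
  have hG := differentiableOn_outerCauchyIntegral (inv_strictAnti₀ hr₁ hr)
    (hf.comp_inv_annulus (hr₁.trans hr))
  refine (hG.comp (differentiableOn_inv.mono fun ζ hζ => ?_) fun ζ hζ => ?_).sub_const _
  · exact norm_pos_iff.1 (hr₁.trans hζ)
  · simpa using inv_strictAnti₀ hr₁ hζ

lemma tendsto_innerCauchyIntegral_cobounded [CompleteSpace E] (hr₁ : 0 < r₁) (hr : r₁ < r₂)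
    (hf : DifferentiableOn ℂ f (annulus r₁ r₂)) :
    Tendsto (innerCauchyIntegral r₁ r₂ f) (cobounded ℂ) (𝓝 0) := by
  have hG := differentiableOn_outerCauchyIntegral (inv_strictAnti₀ hr₁ hr)
    (hf.comp_inv_annulus (hr₁.trans hr))
  have hG₀ : ContinuousAt (outerCauchyIntegral r₂⁻¹ r₁⁻¹ (fun t => f t⁻¹)) 0 :=
    (hG.differentiableAt ((isOpen_lt continuous_norm continuous_const).mem_nhds
      (by simpa using hr₁))).continuousAt
  have h := (hG₀.tendsto.comp tendsto_inv₀_cobounded).sub_const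
    (outerCauchyIntegral r₂⁻¹ r₁⁻¹ (fun t => f t⁻¹) 0)
  rwa [sub_self] at h

lemma eq_zero_of_eqOn_annulus_of_tendsto_zero {u v : ℂ → E} (hr : r₁ < r₂)
    (hu : DifferentiableOn ℂ u {ζ | ‖ζ‖ < r₂}) (hv : DifferentiableOn ℂ v {ζ | r₁ < ‖ζ‖})
    (huv : EqOn u v (annulus r₁ r₂)) (hv₀ : Tendsto v (cobounded ℂ) (𝓝 0)) :
    (∀ ζ, ‖ζ‖ < r₂ → u ζ = 0) ∧ ∀ ζ, r₁ < ‖ζ‖ → v ζ = 0 := by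
  have hdisc : IsOpen {ζ : ℂ | ‖ζ‖ < r₂} := isOpen_lt continuous_norm continuous_const
  have hext : IsOpen {ζ : ℂ | r₁ < ‖ζ‖} := isOpen_lt continuous_const continuous_norm
  set H := {ζ : ℂ | ‖ζ‖ < r₂}.piecewise u v
  have hHu : EqOn H u {ζ | ‖ζ‖ < r₂} := piecewise_eqOn _ _ _
  have hHv : EqOn H v {ζ | r₁ < ‖ζ‖} := fun ζ hζ => by
    by_cases h : ‖ζ‖ < r₂
    · exact (hHu h).trans (huv ⟨hζ, h⟩)
    · exact piecewise_eq_of_notMem _ _ _ h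
  have hH : Differentiable ℂ H := fun ζ => by
    by_cases h : ‖ζ‖ < r₂
    · exact ((hu.differentiableAt (hdisc.mem_nhds h)).congr_of_eventuallyEq
        (eventually_of_mem (hdisc.mem_nhds h) hHu))
    · have h' : r₁ < ‖ζ‖ := hr.trans_le (not_lt.1 h)
      exact ((hv.differentiableAt (hext.mem_nhds h')).congr_of_eventuallyEq
        (eventually_of_mem (hext.mem_nhds h') hHv))
  have hH₀ : Tendsto H (cocompact ℂ) (𝓝 0) := by
    rw [← cobounded_eq_cocompact]
    refine hv₀.congr' (eventually_of_mem ?_ fun ζ hζ => (hHv hζ).symm)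
    rw [← comap_norm_atTop]
    exact preimage_mem_comap (Ioi_mem_atTop r₁)
  have hH_zero : ∀ ζ, H ζ = 0 := fun ζ => hH.apply_eq_of_tendsto_cocompact ζ hH₀
  exact ⟨fun ζ hζ => (hHu hζ).symm.trans (hH_zero ζ), fun ζ hζ => (hHv hζ).symm.trans (hH_zero ζ)⟩

lemma IsAnnulusDecomp.unique {f fp fp' fm fm' : ℂ → ℂ} {c₀ c₀' : ℂ} (hr₂ : 0 < r₂) (hr : r₁ < r₂)
    (h : IsAnnulusDecomp r₁ r₂ f fp c₀ fm) (h' : IsAnnulusDecomp r₁ r₂ f fp' c₀' fm') :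
    (∀ ζ : ℂ, ‖ζ‖ < r₂ → fp ζ = fp' ζ) ∧ c₀ = c₀' ∧ (∀ ζ : ℂ, r₁ < ‖ζ‖ → fm ζ = fm' ζ) := by
  obtain ⟨hfp, hfp₀, hfm, hfm_lim, hf⟩ := h
  obtain ⟨hfp', hfp₀', hfm', hfm_lim', hf'⟩ := h'
  obtain ⟨hu, hv⟩ := eq_zero_of_eqOn_annulus_of_tendsto_zero
    (u := fun ζ => fp ζ - fp' ζ + (c₀ - c₀')) (v := fun ζ => fm' ζ - fm ζ) hr ((hfp.sub hfp').add_const _) (hfm'.sub hfm)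
    (fun ζ hζ => by linear_combination (hf ζ hζ.1 hζ.2).symm.trans (hf' ζ hζ.1 hζ.2))
    (by simpa [comap_norm_atTop] using hfm_lim'.sub hfm_lim)
  have hc : c₀ = c₀' := by
    have h₀ := hu 0 (by simpa using hr₂)
    simp only [hfp₀, hfp₀'] at h₀
    linear_combination h₀
  refine ⟨fun ζ hζ => ?_, hc, fun ζ hζ => ?_⟩
  · linear_combination hu ζ hζ - hc
  · linear_combination -hv ζ hζ

lemma isAnnulusDecomp_cauchyIntegrals {f : ℂ → ℂ} (hr₁ : 0 < r₁) (hr : r₁ < r₂)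
    (hf : DifferentiableOn ℂ f (annulus r₁ r₂)) :
    IsAnnulusDecomp r₁ r₂ f (fun ζ => outerCauchyIntegral r₁ r₂ f ζ - outerCauchyIntegral r₁ r₂ f 0)
      (outerCauchyIntegral r₁ r₂ f 0) (innerCauchyIntegral r₁ r₂ f) :=
  ⟨(differentiableOn_outerCauchyIntegral hr hf).sub_const _, sub_self _,
    differentiableOn_innerCauchyIntegral hr₁ hr hf,
    by simpa [comap_norm_atTop] using tendsto_innerCauchyIntegral_cobounded hr₁ hr hf,
    fun ζ h₁ h₂ => by
      rw [sub_add_cancel, outerCauchyIntegral_add_innerCauchyIntegral hr₁ hf ⟨h₁, h₂⟩]⟩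

/-- Decomposition of a holomorphic function on an annulus into a part holomorphic inside
the outer boundary vanishing at the origin, a constant term, and a part holomorphic
outside the inner boundary vanishing at infinity; the decomposition is unique, and the
constant term is given by the Cauchy integral `(2πi)⁻¹ ∮_{|s|=ρ} f(s)/s ds` for every
intermediate radius `ρ`. -/
theorem annulus_laurent_decomposition
    (r₁ r₂ : ℝ) (hr₁ : 0 < r₁) (hr : r₁ < r₂) (f : ℂ → ℂ)
    (hf : DifferentiableOn ℂ f {ζ : ℂ | r₁ < ‖ζ‖ ∧ ‖ζ‖ < r₂}) :
    (∃ (fp : ℂ → ℂ) (c₀ : ℂ) (fm : ℂ → ℂ),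
      IsAnnulusDecomp r₁ r₂ f fp c₀ fm ∧
      ∀ ρ : ℝ, r₁ < ρ → ρ < r₂ →
        c₀ = (2 * Real.pi * Complex.I)⁻¹ * (∮ s in C(0, ρ), f s / s)) ∧
    (∀ (fp fp' : ℂ → ℂ) (c₀ c₀' : ℂ) (fm fm' : ℂ → ℂ),
      IsAnnulusDecomp r₁ r₂ f fp c₀ fm → IsAnnulusDecomp r₁ r₂ f fp' c₀' fm' →
      (∀ ζ : ℂ, ‖ζ‖ < r₂ → fp ζ = fp' ζ) ∧ c₀ = c₀' ∧
      (∀ ζ : ℂ, r₁ < ‖ζ‖ → fm ζ = fm' ζ)) := by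
  refine ⟨⟨_, _, _, isAnnulusDecomp_cauchyIntegrals hr₁ hr hf, fun ρ hρ₁ hρ₂ => ?_⟩,
    fun _ _ _ _ _ _ h h' => h.unique (hr₁.trans hr) hr h'⟩
  rw [outerCauchyIntegral_eq hf ⟨by simpa using ⟨hρ₁, hr₁.trans hρ₁⟩, hρ₂⟩]
  simp only [sub_zero, smul_eq_mul, div_eq_inv_mul]
end

section
/- Let c, c' > 0, 0 < ρ₁ < ρ₂ < 1, M > 0, and let (tₙ) be a sequence of nonzero complex numbers with tₙ → 0 and |tₙ| < cc'ρ₁² for all n. For each n let fₙ : ℂ → ℂ be holomorphic on the annulus Aₙ = {ζ : |tₙ|/c' < |ζ| < c} and suppose |fₙ(ζ)| ≤ M whenever ρ₁c ≤ |ζ| ≤ ρ₂c and whenever |tₙ|/(c'ρ₂) ≤ |ζ| ≤ |tₙ|/(c'ρ₁). Then there exist a strictly increasing sequence of indices (n_k), a function g holomorphic on the disc {z : |z| < ρ₂c}, and a function h holomorphic on the disc {w : |w| < ρ₂c'}, such that: (i) the functions z ↦ f_{n_k}(z) converge to g uniformly on compact subsets of the punctured disc {z : 0 < |z| < ρ₂c};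 (ii) the functions w ↦ f_{n_k}(t_{n_k}/w) converge to h uniformly on compact subsets of the punctured disc {w : 0 < |w| < ρ₂c'}; and (iii) g(0) = h(0). -/
/-!
On the closed annulus `rₙ ≤ |ζ| ≤ R`, `R = ρ₂c`, `rₙ = |tₙ|/(c'ρ₂)`, the Cauchy formula writes
`fₙ` as the power series `∑ aₙₘ ζᵐ` given by the integral over `|ζ| = R`, minus the integral over
`|ζ| = rₙ`; the latter is `O(rₙ)` away from `0` because `fₙ` is bounded on that circle. Cauchy's
estimate `|aₙₘ| ≤ M / Rᵐ` lets us extract a subsequence along which every coefficient converges, and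
then the power series converge uniformly on smaller discs by dominated convergence. The coordinate
`w = tₙ/ζ` exchanges the two boundary circles, so the same argument applies to `fₙ(tₙ/w)`. Both
constant terms are averages of `fₙ` over circles in the annulus, which do not depend on the radius;
hence `g 0 = h 0`.
-/

open Filter Metric Set Topology Real Complex FormalMultilinearSeries

theorem tendstoUniformlyOn_of_dist_le {ι α β : Type*} [PseudoMetricSpace β] {l : Filter ι}
    {F : ι → α → β} {f : α → β} {s : Set α} {e : ι → ℝ} (he : Tendsto e l (𝓝 0))
    (hd : ∀ᶠ k in l, ∀ x ∈ s, dist (f x) (F k x) ≤ e k) : TendstoUniformlyOn F f l s := by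
  refine Metric.tendstoUniformlyOn_iff.2 fun ε hε => ?_
  filter_upwards [hd, he.eventually (gt_mem_nhds hε)] with k hk hek x hx
  exact (hk x hx).trans_lt hek

theorem TendstoUniformlyOn.of_dist_le {ι α β : Type*} [PseudoMetricSpace β] {l : Filter ι}
    {F G : ι → α → β} {f : α → β} {s : Set α} {e : ι → ℝ} (hG : TendstoUniformlyOn G f l s)
    (he : Tendsto e l (𝓝 0)) (hd : ∀ᶠ k in l, ∀ x ∈ s, dist (G k x) (F k x) ≤ e k) :
    TendstoUniformlyOn F f l s := by
  refine Metric.tendstoUniformlyOn_iff.2 fun ε hε => ?_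
  filter_upwards [Metric.tendstoUniformlyOn_iff.1 hG (ε / 2) (half_pos hε), hd,
    he.eventually (gt_mem_nhds (half_pos hε))] with k hGk hk hek x hx
  calc dist (f x) (F k x) ≤ dist (f x) (G k x) + dist (G k x) (F k x) := dist_triangle _ _ _
    _ < ε / 2 + ε / 2 := add_lt_add_of_lt_of_le (hGk x hx) ((hk x hx).trans hek.le)
    _ = ε := add_halves ε

theorem exists_subseq_tendsto_of_forall_norm_le {E : Type*} [NormedAddCommGroup E] [ProperSpace E]
    {a : ℕ → ℕ → E} {C : ℕ → ℝ} (h : ∀ n m, ‖a n m‖ ≤ C m) :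
    ∃ φ : ℕ → ℕ, StrictMono φ ∧ ∃ α : ℕ → E, (∀ m, ‖α m‖ ≤ C m) ∧
      ∀ m, Tendsto (fun k => a (φ k) m) atTop (𝓝 (α m)) := by
  have hcompact : IsCompact (univ.pi fun m => closedBall (0 : E) (C m)) :=
    isCompact_univ_pi fun m => isCompact_closedBall _ _
  obtain ⟨α, hα, φ, hφ, hconv⟩ :=
    hcompact.isSeqCompact fun n => mem_univ_pi.2 fun m => mem_closedBall_zero_iff.2 (h n m)
  exact ⟨φ, hφ, α, fun m => mem_closedBall_zero_iff.1 (mem_univ_pi.1 hα m),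
    tendsto_pi_nhds.1 hconv⟩

theorem IsCompact.exists_forall_le_norm_le {K : Set ℂ} {R : ℝ} (hK : IsCompact K)
    (hne : K.Nonempty) (hKsub : K ⊆ {z : ℂ | 0 < ‖z‖ ∧ ‖z‖ < R}) :
    ∃ ε ρ : ℝ, 0 < ε ∧ ε ≤ ρ ∧ ρ < R ∧ ∀ z ∈ K, ε ≤ ‖z‖ ∧ ‖z‖ ≤ ρ := by
  obtain ⟨z₀, hz₀, hmin⟩ := hK.exists_isMinOn hne continuous_norm.continuousOn
  obtain ⟨z₁, hz₁, hmax⟩ := hK.exists_isMaxOn hne continuous_norm.continuousOn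
  exact ⟨‖z₀‖, ‖z₁‖, (hKsub hz₀).1, hmin hz₁, (hKsub hz₁).2, fun z hz => ⟨hmin hz, hmax hz⟩⟩

theorem norm_smul_pow_le_of_norm_le {c z : ℂ} {M R ρ : ℝ} {m : ℕ}
    (hc : ‖c‖ ≤ M / R ^ m) (hz : ‖z‖ ≤ ρ) : ‖c • z ^ m‖ ≤ M * (ρ / R) ^ m := by
  rw [norm_smul, norm_pow, div_pow, show M * (ρ ^ m / R ^ m) = M / R ^ m * ρ ^ m by ring]
  exact mul_le_mul hc (pow_le_pow_left₀ (norm_nonneg z) hz m) (by positivity)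
    ((norm_nonneg c).trans hc)

theorem summable_norm_smul_pow {α : ℕ → ℂ} {z : ℂ} {M R ρ : ℝ} (hR : 0 < R) (hρ : 0 ≤ ρ)
    (hρR : ρ < R) (hα : ∀ m, ‖α m‖ ≤ M / R ^ m) (hz : ‖z‖ ≤ ρ) :
    Summable fun m => ‖α m • z ^ m‖ :=
  .of_nonneg_of_le (fun m => norm_nonneg _) (fun m => norm_smul_pow_le_of_norm_le (hα m) hz)
    ((summable_geometric_of_lt_one (by positivity) ((div_lt_one hR).2 hρR)).mul_left M)

theorem differentiableOn_ofScalarsSum {α : ℕ → ℂ} {M R : ℝ} (hR : 0 < R)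
    (hα : ∀ m, ‖α m‖ ≤ M / R ^ m) : DifferentiableOn ℂ (ofScalarsSum α : ℂ → ℂ) (ball 0 R) := by
  set p := ofScalars ℂ α
  have hradius : ENNReal.ofReal R ≤ p.radius := by
    refine p.le_radius_of_bound M fun m => ?_
    rw [ofScalars_norm, Real.coe_toNNReal R hR.le, ← le_div_iff₀ (by positivity)]
    exact hα m
  have hpos : 0 < p.radius := (ENNReal.ofReal_pos.2 hR).trans_le hradius
  refine (p.hasFPowerSeriesOnBall hpos).differentiableOn.mono fun z hz => ?_
  rw [Metric.mem_eball, edist_zero_right, ← ofReal_norm]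
  exact ((ENNReal.ofReal_lt_ofReal_iff hR).2 (mem_ball_zero_iff.1 hz)).trans_le hradius

theorem tendstoUniformlyOn_ofScalarsSum {ι : Type*} {l : Filter ι} {a : ι → ℕ → ℂ} {α : ℕ → ℂ}
    {M R ρ : ℝ} (hR : 0 < R) (hρ : 0 ≤ ρ) (hρR : ρ < R) (ha : ∀ k m, ‖a k m‖ ≤ M / R ^ m)
    (hα : ∀ m, ‖α m‖ ≤ M / R ^ m) (hconv : ∀ m, Tendsto (fun k => a k m) l (𝓝 (α m))) :
    TendstoUniformlyOn (fun k => (ofScalarsSum (a k) : ℂ → ℂ)) (ofScalarsSum α) l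
      (closedBall 0 ρ) := by
  have hdiff : ∀ k m, ‖α m - a k m‖ ≤ 2 * M / R ^ m := fun k m => by
    rw [two_mul, add_div]; exact (norm_sub_le _ _).trans (add_le_add (hα m) (ha k m))
  refine tendstoUniformlyOn_of_dist_le (e := fun k => ∑' m, ‖(α m - a k m) • (ρ : ℂ) ^ m‖) ?_ ?_
  · have hlim := tendsto_tsum_of_dominated_convergence
      ((summable_geometric_of_lt_one (div_nonneg hρ hR.le) ((div_lt_one hR).2 hρR)).mul_left
        (2 * M))
      (fun m => ((tendsto_const_nhds.sub (hconv m)).smul_const ((ρ : ℂ) ^ m)).norm)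
      (Eventually.of_forall fun k m => by
        rw [norm_norm]
        exact norm_smul_pow_le_of_norm_le (hdiff k m) (by simp [abs_of_nonneg hρ]))
    simpa using hlim
  · refine Eventually.of_forall fun k z hz => ?_
    have hz : ‖z‖ ≤ ρ := mem_closedBall_zero_iff.1 hz
    have hsα := summable_norm_smul_pow hR hρ hρR hα hz
    have hsa := summable_norm_smul_pow hR hρ hρR (ha k) hz
    rw [ofScalars_sum_eq, ofScalars_sum_eq, dist_eq_norm, ← hsα.of_norm.tsum_sub hsa.of_norm]
    have hsρ : Summable fun m => ‖(α m - a k m) • (ρ : ℂ) ^ m‖ :=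
      summable_norm_smul_pow hR hρ hρR (hdiff k) (by simp [abs_of_nonneg hρ])
    have hle : ∀ m, ‖α m • z ^ m - a k m • z ^ m‖ ≤ ‖(α m - a k m) • (ρ : ℂ) ^ m‖ := fun m => by
      rw [← sub_smul, norm_smul, norm_smul, norm_pow, norm_pow, norm_real, norm_of_nonneg hρ]
      gcongr
    exact (norm_tsum_le_tsum_norm (hsρ.of_nonneg_of_le (fun _ => norm_nonneg _) hle)).trans
      (Summable.tsum_le_tsum hle (hsρ.of_nonneg_of_le (fun _ => norm_nonneg _) hle) hsρ)

theorem cauchyPowerSeries_coeff {E : Type*} [NormedAddCommGroup E] [NormedSpace ℂ E]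
    (f : ℂ → E) (c : ℂ) (R : ℝ) (n : ℕ) :
    (cauchyPowerSeries f c R).coeff n =
      (2 * π * I : ℂ)⁻¹ • ∮ z in C(c, R), (z - c)⁻¹ ^ n • (z - c)⁻¹ • f z := by
  simp [coeff, cauchyPowerSeries]

theorem norm_coeff_cauchyPowerSeries_le {E : Type*} [NormedAddCommGroup E] [NormedSpace ℂ E]
    {f : ℂ → E} {c : ℂ} {R M : ℝ} (hR : 0 < R) (hf : ∀ z ∈ sphere c R, ‖f z‖ ≤ M) (n : ℕ) :
    ‖(cauchyPowerSeries f c R).coeff n‖ ≤ M / R ^ n := by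
  rw [cauchyPowerSeries_coeff]
  refine (circleIntegral.norm_two_pi_i_inv_smul_integral_le_of_norm_le_const hR.le
    (C := R⁻¹ ^ n * (R⁻¹ * M)) fun z hz => ?_).trans_eq (by rw [inv_pow]; field_simp)
  have hz : ‖z - c‖ = R := mem_sphere_iff_norm.1 hz
  rw [norm_smul, norm_smul, norm_pow, norm_inv, hz]
  gcongr
  exact hf z (mem_sphere_iff_norm.2 hz)

theorem cauchyPowerSeries_coeff_zero {E : Type*} [NormedAddCommGroup E] [NormedSpace ℂ E]
    (f : ℂ → E) (c : ℂ) {R : ℝ} (hR : R ≠ 0) :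
    (cauchyPowerSeries f c R).coeff 0 = circleAverage f c R := by
  rw [cauchyPowerSeries_coeff, circleAverage_eq_circleIntegral hR]
  simp

theorem circleAverage_comp_div {E : Type*} [NormedAddCommGroup E] [NormedSpace ℝ E]
    (f : ℂ → E) (τ : ℂ) (R : ℝ) :
    circleAverage (fun w => f (τ / w)) 0 R = circleAverage f 0 (‖τ‖ / R) := by
  have hτ : circleMap 0 ‖τ‖ τ.arg = τ := by rw [circleMap_zero, norm_mul_exp_arg_mul_I]
  have hper : Function.Periodic (fun θ => f (circleMap 0 (‖τ‖ / R) θ)) (2 * π) := fun θ => by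
    simp only [periodic_circleMap 0 _ θ]
  have hshift := hper.intervalIntegral_add_eq (τ.arg - 2 * π) 0
  rw [sub_add_cancel, zero_add] at hshift
  simp only [circleAverage_def]
  congr 1
  calc ∫ θ in 0..2 * π, f (τ / circleMap 0 R θ)
      = ∫ θ in 0..2 * π, f (circleMap 0 (‖τ‖ / R) (τ.arg - θ)) := by
        simp only [← circleMap_zero_div, hτ]
    _ = ∫ θ in 0..2 * π, f (circleMap 0 (‖τ‖ / R) θ) := by
        rw [intervalIntegral.integral_comp_sub_left (fun θ => f (circleMap 0 (‖τ‖ / R) θ)),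
          sub_zero, hshift]

theorem circleIntegral_sub_inv_smul_eq_dslope_add {E : Type*} [NormedAddCommGroup E]
    [NormedSpace ℂ E] [CompleteSpace E] {f : ℂ → E} {c z : ℂ} {ρ : ℝ} (hρ : 0 ≤ ρ)
    (hz : z ∉ sphere c ρ) (hf : ContinuousOn (dslope f z) (sphere c ρ)) :
    (∮ ζ in C(c, ρ), (ζ - z)⁻¹ • f ζ) =
      (∮ ζ in C(c, ρ), dslope f z ζ) + (∮ ζ in C(c, ρ), (ζ - z)⁻¹) • f z := by
  have hne : ∀ ζ ∈ sphere c ρ, ζ - z ≠ 0 := fun ζ hζ h => hz (sub_eq_zero.1 h ▸ hζ)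
  have hint : CircleIntegrable (fun ζ => (ζ - z)⁻¹ • f z) c ρ :=
    (((continuousOn_id.sub continuousOn_const).inv₀ hne).smul
      continuousOn_const).circleIntegrable hρ
  rw [← circleIntegral.integral_smul_const,
    ← circleIntegral.integral_add (hf.circleIntegrable hρ) hint]
  refine circleIntegral.integral_congr hρ fun ζ hζ => ?_
  rw [dslope_of_ne f (sub_ne_zero.1 (hne ζ hζ)), slope_def_module, smul_sub, sub_add_cancel]

theorem circleIntegral_sub_inv_smul_annulus {E : Type*} [NormedAddCommGroup E] [NormedSpace ℂ E]
    [CompleteSpace E] {f : ℂ → E} {r R : ℝ} {z : ℂ} (hr : 0 < r) (hrR : r < R)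
    (hf : ∀ ζ ∈ closedBall (0 : ℂ) R \ ball 0 r, DifferentiableAt ℂ f ζ)
    (hz : z ∈ ball (0 : ℂ) R \ closedBall 0 r) :
    (∮ ζ in C(0, R), (ζ - z)⁻¹ • f ζ) - (∮ ζ in C(0, r), (ζ - z)⁻¹ • f ζ) = (2 * π * I) • f z := by
  have hopen : ball (0 : ℂ) R \ closedBall 0 r ⊆ closedBall 0 R \ ball 0 r :=
    sdiff_subset_sdiff ball_subset_closedBall ball_subset_closedBall
  have hnhds : ball (0 : ℂ) R \ closedBall 0 r ∈ 𝓝 z :=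
    (isOpen_ball.sdiff isClosed_closedBall).mem_nhds hz
  have hdslope : ∀ ζ ∈ closedBall (0 : ℂ) R \ ball 0 r, DifferentiableAt ℂ (dslope f z) ζ := by
    intro ζ hζ
    rcases eq_or_ne ζ z with rfl | hne
    · exact ((Complex.differentiableOn_dslope hnhds).2 fun w hw =>
        (hf w (hopen hw)).differentiableWithinAt).differentiableAt hnhds
    · exact (differentiableAt_dslope_of_ne hne).2 (hf ζ hζ)
  have hzr : ∀ ζ ∈ closedBall (0 : ℂ) r, ζ - z ≠ 0 := fun ζ hζ h => hz.2 (sub_eq_zero.1 h ▸ hζ)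
  have hinner : (∮ ζ in C(0, r), (ζ - z)⁻¹) = 0 :=
    circleIntegral_eq_zero_of_differentiable_on_off_countable hr.le countable_empty
      ((continuousOn_id.sub continuousOn_const).inv₀ hzr) fun ζ hζ =>
        (differentiableAt_id.sub_const z).inv (hzr ζ (ball_subset_closedBall hζ.1))
  have hgoursat : (∮ ζ in C(0, R), dslope f z ζ) = ∮ ζ in C(0, r), dslope f z ζ :=
    circleIntegral_eq_of_differentiable_on_annulus_off_countable hr hrR.le countable_empty
      (fun ζ hζ => (hdslope ζ hζ).continuousAt.continuousWithinAt) fun ζ hζ =>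
        hdslope ζ (hopen hζ.1)
  have hzR : ‖z‖ < R := mem_ball_zero_iff.1 hz.1
  have hrz : r < ‖z‖ := lt_of_not_ge fun h => hz.2 (mem_closedBall_zero_iff.2 h)
  have hsphere : ∀ ρ, r ≤ ρ → ρ ≤ R → sphere (0 : ℂ) ρ ⊆ closedBall 0 R \ ball 0 r :=
    fun ρ hrρ hρR ζ hζ => by
      rw [mem_sphere_zero_iff_norm] at hζ
      simp [hζ, hrρ, hρR]
  have hcont : ∀ ρ, r ≤ ρ → ρ ≤ R → ContinuousOn (dslope f z) (sphere 0 ρ) := fun ρ hrρ hρR ζ hζ =>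
    (hdslope ζ (hsphere ρ hrρ hρR hζ)).continuousAt.continuousWithinAt
  rw [circleIntegral_sub_inv_smul_eq_dslope_add (hr.trans hrR).le
      (fun h => hzR.ne (mem_sphere_zero_iff_norm.1 h)) (hcont R hrR.le le_rfl),
    circleIntegral_sub_inv_smul_eq_dslope_add hr.le
      (fun h => hrz.ne' (mem_sphere_zero_iff_norm.1 h)) (hcont r le_rfl hrR.le), hgoursat, hinner,
    circleIntegral.integral_sub_inv_of_mem_ball hz.1, zero_smul, add_zero, add_sub_cancel_left]

/-- The paper's band boundedness, with the bands shrunk to the boundary circles of the annulus. -/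
structure AnnulusBounded (F : ℂ → ℂ) (r R M : ℝ) : Prop where
  pos : 0 < r
  lt : r < R
  differentiableAt : ∀ z ∈ closedBall (0 : ℂ) R \ ball 0 r, DifferentiableAt ℂ F z
  norm_le_inner : ∀ z ∈ sphere (0 : ℂ) r, ‖F z‖ ≤ M
  norm_le_outer : ∀ z ∈ sphere (0 : ℂ) R, ‖F z‖ ≤ M

namespace AnnulusBounded

variable {F : ℂ → ℂ} {r R M : ℝ}

theorem bound_nonneg (h : AnnulusBounded F r R M) : 0 ≤ M :=
  (norm_nonneg _).trans (h.norm_le_outer R (by simp [abs_of_pos (h.pos.trans h.lt)]))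

theorem norm_coeff_le (h : AnnulusBounded F r R M) (m : ℕ) :
    ‖(cauchyPowerSeries F 0 R).coeff m‖ ≤ M / R ^ m :=
  norm_coeff_cauchyPowerSeries_le (h.pos.trans h.lt) h.norm_le_outer m

theorem circleAverage_eq (h : AnnulusBounded F r R M) :
    circleAverage F 0 r = circleAverage F 0 R := by
  have hcont : ContinuousOn F (closedBall 0 R \ ball 0 r) := fun z hz =>
    (h.differentiableAt z hz).continuousAt.continuousWithinAt
  rw [circleAverage_eq_circleIntegral h.pos.ne',
    circleAverage_eq_circleIntegral (h.pos.trans h.lt).ne',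
    Complex.circleIntegral_sub_center_inv_smul_eq_of_differentiable_on_annulus_off_countable
      h.pos h.lt.le countable_empty hcont fun z hz => h.differentiableAt z
        (sdiff_subset_sdiff ball_subset_closedBall ball_subset_closedBall hz.1)]

/-- `F` minus its outer Cauchy power series is the Cauchy integral over the inner circle. -/
theorem norm_sub_ofScalarsSum_coeff_le (h : AnnulusBounded F r R M) {z : ℂ}
    (hz : z ∈ ball (0 : ℂ) R \ closedBall 0 r) :
    ‖F z - ofScalarsSum (cauchyPowerSeries F 0 R).coeff z‖ ≤ r * (M / (‖z‖ - r)) := by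
  have hrz : r < ‖z‖ := lt_of_not_ge fun h => hz.2 (mem_closedBall_zero_iff.2 h)
  have hcont : ContinuousOn F (sphere 0 R) := fun ζ hζ =>
    (h.differentiableAt ζ ⟨sphere_subset_closedBall hζ, by
      simp [mem_sphere_zero_iff_norm.1 hζ, h.lt.le]⟩).continuousAt.continuousWithinAt
  have hsum : ofScalarsSum (cauchyPowerSeries F 0 R).coeff z =
      (2 * π * I : ℂ)⁻¹ • ∮ ζ in C(0, R), (ζ - z)⁻¹ • F ζ := by
    have := hasSum_cauchyPowerSeries_integral (hcont.circleIntegrable (h.pos.trans h.lt).le)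
      (mem_ball_zero_iff.1 hz.1)
    simp only [apply_eq_pow_smul_coeff, zero_add] at this
    rw [ofScalars_sum_eq, ← this.tsum_eq]
    simp only [smul_eq_mul, mul_comm]
  have hF : F z = (2 * π * I : ℂ)⁻¹ •
      ((∮ ζ in C(0, R), (ζ - z)⁻¹ • F ζ) - ∮ ζ in C(0, r), (ζ - z)⁻¹ • F ζ) := by
    rw [circleIntegral_sub_inv_smul_annulus h.pos h.lt h.differentiableAt hz,
      inv_smul_smul₀ two_pi_I_ne_zero]
  rw [hF, hsum, smul_sub, sub_sub_cancel_left, norm_neg]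
  refine circleIntegral.norm_two_pi_i_inv_smul_integral_le_of_norm_le_const h.pos.le
    fun ζ hζ => ?_
  have hζ : ‖ζ‖ = r := mem_sphere_zero_iff_norm.1 hζ
  have hdist : ‖z‖ - r ≤ ‖ζ - z‖ := by
    rw [← hζ, norm_sub_rev]; exact norm_sub_norm_le z ζ
  rw [norm_smul, norm_inv, ← div_eq_inv_mul]
  exact div_le_div₀ h.bound_nonneg (h.norm_le_inner ζ (mem_sphere_zero_iff_norm.2 hζ))
    (sub_pos.2 hrz) hdist

theorem comp_div (h : AnnulusBounded F r R M) {τ : ℂ} (hτ : τ ≠ 0) :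
    AnnulusBounded (fun w => F (τ / w)) (‖τ‖ / R) (‖τ‖ / r) M := by
  have hτ' : 0 < ‖τ‖ := norm_pos_iff.2 hτ
  have hR : 0 < R := h.pos.trans h.lt
  have hsphere : ∀ ρ ≠ 0, ∀ w ∈ sphere (0 : ℂ) (‖τ‖ / ρ), τ / w ∈ sphere 0 ρ := fun ρ hρ w hw => by
    rw [mem_sphere_zero_iff_norm] at hw ⊢
    rw [norm_div, hw, div_div_cancel₀ hτ'.ne']
  refine ⟨div_pos hτ' hR, div_lt_div_of_pos_left hτ' h.pos h.lt, fun w hw => ?_,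
    fun w hw => h.norm_le_outer _ (hsphere R hR.ne' w hw),
    fun w hw => h.norm_le_inner _ (hsphere r h.pos.ne' w hw)⟩
  simp only [Set.mem_sdiff, mem_closedBall_zero_iff, mem_ball_zero_iff, not_lt] at hw
  have hw0 : 0 < ‖w‖ := (div_pos hτ' hR).trans_le hw.2
  have hmem : τ / w ∈ closedBall (0 : ℂ) R \ ball 0 r := by
    simp only [Set.mem_sdiff, mem_closedBall_zero_iff, mem_ball_zero_iff, not_lt, norm_div]
    exact ⟨(div_le_comm₀ hw0 hR).2 hw.2, (le_div_comm₀ h.pos hw0).2 hw.1⟩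
  exact (h.differentiableAt _ hmem).comp w
    ((differentiableAt_const τ).div differentiableAt_id (norm_pos_iff.1 hw0))

theorem coeff_zero_comp_div (h : AnnulusBounded F r R M) {τ : ℂ} (hτ : τ ≠ 0) :
    (cauchyPowerSeries (fun w => F (τ / w)) 0 (‖τ‖ / r)).coeff 0 =
      (cauchyPowerSeries F 0 R).coeff 0 := by
  have hτ' : 0 < ‖τ‖ := norm_pos_iff.2 hτ
  rw [cauchyPowerSeries_coeff_zero _ _ (div_pos hτ' h.pos).ne', circleAverage_comp_div,
    div_div_cancel₀ hτ'.ne', h.circleAverage_eq,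
    cauchyPowerSeries_coeff_zero _ _ (h.pos.trans h.lt).ne']

end AnnulusBounded

theorem tendstoUniformlyOn_ofScalarsSum_of_annulusBounded {ι : Type*} {l : Filter ι}
    {F : ι → ℂ → ℂ} {r : ι → ℝ} {R M : ℝ} {α : ℕ → ℂ}
    (hF : ∀ k, AnnulusBounded (F k) (r k) R M) (hr : Tendsto r l (𝓝 0))
    (hα : ∀ m, ‖α m‖ ≤ M / R ^ m)
    (hconv : ∀ m, Tendsto (fun k => (cauchyPowerSeries (F k) 0 R).coeff m) l (𝓝 (α m)))
    {K : Set ℂ} (hK : IsCompact K) (hKsub : K ⊆ {z : ℂ | 0 < ‖z‖ ∧ ‖z‖ < R}) :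
    TendstoUniformlyOn F (ofScalarsSum α) l K := by
  rcases K.eq_empty_or_nonempty with rfl | hne
  · exact tendstoUniformlyOn_empty
  obtain ⟨ε, ρ, hε, hερ, hρR, hKε⟩ := hK.exists_forall_le_norm_le hne hKsub
  have hR : 0 < R := hε.trans_le hερ |>.trans hρR
  have hseries := tendstoUniformlyOn_ofScalarsSum hR (hε.le.trans hερ) hρR
    (fun k m => (hF k).norm_coeff_le m) hα hconv
  have hinner : Tendsto (fun k => r k * (M / (ε - r k))) l (𝓝 0) := by
    simpa using hr.mul (tendsto_const_nhds.div (tendsto_const_nhds.sub hr) (by simpa using hε.ne'))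
  refine (hseries.mono fun z hz => mem_closedBall_zero_iff.2 (hKε z hz).2).of_dist_le hinner ?_
  filter_upwards [hr.eventually (gt_mem_nhds hε)] with k hk z hz
  have hzK := hKε z hz
  have hzann : z ∈ ball (0 : ℂ) R \ closedBall 0 (r k) := by
    simp only [Set.mem_sdiff, mem_ball_zero_iff, mem_closedBall_zero_iff, not_le]
    exact ⟨hzK.2.trans_lt hρR, hk.trans_le hzK.1⟩
  rw [dist_comm, dist_eq_norm]
  refine ((hF k).norm_sub_ofScalarsSum_coeff_le hzann).trans ?_
  gcongr
  · exact (hF k).pos.le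
  · exact (hF k).bound_nonneg
  · exact hzK.1

theorem annulusBounded_of_bands {F : ℂ → ℂ} {τ : ℂ} {c c' ρ₁ ρ₂ M : ℝ} (hc : 0 < c)
    (hc' : 0 < c') (hρ₁ : 0 < ρ₁) (hρ : ρ₁ < ρ₂) (hρ₂ : ρ₂ < 1) (hτ : τ ≠ 0)
    (hτsmall : ‖τ‖ < c * c' * ρ₁ ^ 2)
    (hF : DifferentiableOn ℂ F {ζ : ℂ | ‖τ‖ / c' < ‖ζ‖ ∧ ‖ζ‖ < c})
    (hout : ∀ ζ : ℂ, ρ₁ * c ≤ ‖ζ‖ → ‖ζ‖ ≤ ρ₂ * c → ‖F ζ‖ ≤ M)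
    (hin : ∀ ζ : ℂ, ‖τ‖ / (c' * ρ₂) ≤ ‖ζ‖ → ‖ζ‖ ≤ ‖τ‖ / (c' * ρ₁) → ‖F ζ‖ ≤ M) :
    AnnulusBounded F (‖τ‖ / (c' * ρ₂)) (ρ₂ * c) M := by
  have hτ' : 0 < ‖τ‖ := norm_pos_iff.2 hτ
  have hρ₂' : 0 < ρ₂ := hρ₁.trans hρ
  refine ⟨by positivity, ?_, fun ζ hζ => ?_, fun ζ hζ => ?_, fun ζ hζ => ?_⟩
  · rw [div_lt_iff₀ (by positivity)]
    nlinarith [mul_pos hc hc', mul_lt_mul_of_pos_left hρ hρ₁, mul_lt_mul_of_pos_right hρ hρ₂']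
  · simp only [Set.mem_sdiff, mem_closedBall_zero_iff, mem_ball_zero_iff, not_lt] at hζ
    have hopen : IsOpen {ζ : ℂ | ‖τ‖ / c' < ‖ζ‖ ∧ ‖ζ‖ < c} :=
      (isOpen_lt continuous_const continuous_norm).inter
        (isOpen_lt continuous_norm continuous_const)
    refine hF.differentiableAt (hopen.mem_nhds ⟨?_, ?_⟩)
    · exact (div_lt_div_of_pos_left hτ' (by positivity) (by nlinarith)).trans_le hζ.2
    · exact hζ.1.trans_lt (by nlinarith)
  · rw [mem_sphere_zero_iff_norm] at hζ
    exact hin ζ hζ.ge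
      (hζ.trans_le (div_le_div_of_nonneg_left hτ'.le (by positivity) (by nlinarith)))
  · rw [mem_sphere_zero_iff_norm] at hζ
    exact hout ζ (by nlinarith) hζ.le

theorem normal_families_band_bounded_general
    (c c' ρ₁ ρ₂ M : ℝ) (hc : 0 < c) (hc' : 0 < c')
    (hρ₁ : 0 < ρ₁) (hρ : ρ₁ < ρ₂) (hρ₂ : ρ₂ < 1)
    (t : ℕ → ℂ) (ht0 : ∀ n, t n ≠ 0)
    (htlim : Tendsto t atTop (nhds 0))
    (htsmall : ∀ n, ‖t n‖ < c * c' * ρ₁ ^ 2)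
    (f : ℕ → ℂ → ℂ)
    (hf : ∀ n, DifferentiableOn ℂ (f n)
      {ζ : ℂ | ‖t n‖ / c' < ‖ζ‖ ∧ ‖ζ‖ < c})
    (hband_out : ∀ n, ∀ ζ : ℂ, ρ₁ * c ≤ ‖ζ‖ → ‖ζ‖ ≤ ρ₂ * c →
      ‖f n ζ‖ ≤ M)
    (hband_in : ∀ n, ∀ ζ : ℂ, ‖t n‖ / (c' * ρ₂) ≤ ‖ζ‖ →
      ‖ζ‖ ≤ ‖t n‖ / (c' * ρ₁) → ‖f n ζ‖ ≤ M) :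
    ∃ nk : ℕ → ℕ, StrictMono nk ∧
    ∃ g h : ℂ → ℂ,
      DifferentiableOn ℂ g {z : ℂ | ‖z‖ < ρ₂ * c} ∧
      DifferentiableOn ℂ h {w : ℂ | ‖w‖ < ρ₂ * c'} ∧
      (∀ K : Set ℂ, IsCompact K →
        K ⊆ {z : ℂ | 0 < ‖z‖ ∧ ‖z‖ < ρ₂ * c} →
        TendstoUniformlyOn (fun k z => f (nk k) z) g atTop K) ∧
      (∀ K : Set ℂ, IsCompact K →
        K ⊆ {w : ℂ | 0 < ‖w‖ ∧ ‖w‖ < ρ₂ * c'} →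
        TendstoUniformlyOn (fun k w => f (nk k) (t (nk k) / w)) h atTop K) ∧
      g 0 = h 0 := by
  have hz n : AnnulusBounded (f n) (‖t n‖ / (c' * ρ₂)) (ρ₂ * c) M :=
    annulusBounded_of_bands hc hc' hρ₁ hρ hρ₂ (ht0 n) (htsmall n) (hf n) (hband_out n) (hband_in n)
  have hinv n : ‖t n‖ / (‖t n‖ / (c' * ρ₂)) = ρ₂ * c' := by
    rw [div_div_cancel₀ (norm_ne_zero_iff.2 (ht0 n)), mul_comm]
  have hw n : AnnulusBounded (fun w => f n (t n / w)) (‖t n‖ / (ρ₂ * c)) (ρ₂ * c') M :=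
    hinv n ▸ (hz n).comp_div (ht0 n)
  have hcoeff₀ n : (cauchyPowerSeries (fun w => f n (t n / w)) 0 (ρ₂ * c')).coeff 0 =
      (cauchyPowerSeries (f n) 0 (ρ₂ * c)).coeff 0 :=
    hinv n ▸ (hz n).coeff_zero_comp_div (ht0 n)
  have hr : Tendsto (fun n => ‖t n‖ / (c' * ρ₂)) atTop (𝓝 0) := by
    simpa using htlim.norm.div_const (c' * ρ₂)
  have hr' : Tendsto (fun n => ‖t n‖ / (ρ₂ * c)) atTop (𝓝 0) := by
    simpa using htlim.norm.div_const (ρ₂ * c)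
  obtain ⟨φ, hφ, α, hα, hαconv⟩ :=
    exists_subseq_tendsto_of_forall_norm_le fun n m => (hz n).norm_coeff_le m
  obtain ⟨ψ, hψ, β, hβ, hβconv⟩ :=
    exists_subseq_tendsto_of_forall_norm_le fun k m => (hw (φ k)).norm_coeff_le m
  have hnk := (hφ.comp hψ).tendsto_atTop
  have hαconv' m := (hαconv m).comp hψ.tendsto_atTop
  have hρ₂' : 0 < ρ₂ := hρ₁.trans hρ
  refine ⟨φ ∘ ψ, hφ.comp hψ, ofScalarsSum α, ofScalarsSum β,
    (differentiableOn_ofScalarsSum (mul_pos hρ₂' hc) hα).mono fun z => mem_ball_zero_iff.2,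
    (differentiableOn_ofScalarsSum (mul_pos hρ₂' hc') hβ).mono fun w => mem_ball_zero_iff.2,
    fun K hK hKsub => ?_, fun K hK hKsub => ?_, ?_⟩
  · exact tendstoUniformlyOn_ofScalarsSum_of_annulusBounded (fun k => hz _)
      (hr.comp hnk) hα hαconv' hK hKsub
  · exact tendstoUniformlyOn_ofScalarsSum_of_annulusBounded (fun k => hw _)
      (hr'.comp hnk) hβ hβconv hK hKsub
  · simp only [ofScalarsSum_zero, smul_eq_mul, mul_one]
    exact tendsto_nhds_unique (hαconv' 0)
      (by simpa only [hcoeff₀, Function.comp_def] using hβconv 0)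

/-- Normal families lemma for band bounded sequences of coefficient functions on
degenerating annuli: a sequence `fₙ` holomorphic on the annuli
`{|tₙ|/c' < |ζ| < c}`, bounded by `M` on the outer bands `{ρ₁c ≤ |ζ| ≤ ρ₂c}` and the
inner bands `{|tₙ|/(c'ρ₂) ≤ |ζ| ≤ |tₙ|/(c'ρ₁)}`, has a subsequence converging uniformly
on compacta of the punctured discs `{0 < |z| < ρ₂c}` and (in the coordinate `w = tₙ/ζ`)
`{0 < |w| < ρ₂c'}` to holomorphic limits `g`, `h` with matching values `g 0 = h 0`. -/
theorem normal_families_band_bounded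
    (c c' ρ₁ ρ₂ M : ℝ) (hc : 0 < c) (hc' : 0 < c')
    (hρ₁ : 0 < ρ₁) (hρ : ρ₁ < ρ₂) (hρ₂ : ρ₂ < 1) (hM : 0 < M)
    (t : ℕ → ℂ) (ht0 : ∀ n, t n ≠ 0)
    (htlim : Tendsto t atTop (nhds 0))
    (htsmall : ∀ n, ‖t n‖ < c * c' * ρ₁ ^ 2)
    (f : ℕ → ℂ → ℂ)
    (hf : ∀ n, DifferentiableOn ℂ (f n)
      {ζ : ℂ | ‖t n‖ / c' < ‖ζ‖ ∧ ‖ζ‖ < c})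
    (hband_out : ∀ n, ∀ ζ : ℂ, ρ₁ * c ≤ ‖ζ‖ → ‖ζ‖ ≤ ρ₂ * c →
      ‖f n ζ‖ ≤ M)
    (hband_in : ∀ n, ∀ ζ : ℂ, ‖t n‖ / (c' * ρ₂) ≤ ‖ζ‖ →
      ‖ζ‖ ≤ ‖t n‖ / (c' * ρ₁) → ‖f n ζ‖ ≤ M) :
    ∃ nk : ℕ → ℕ, StrictMono nk ∧
    ∃ g h : ℂ → ℂ,
      DifferentiableOn ℂ g {z : ℂ | ‖z‖ < ρ₂ * c} ∧
      DifferentiableOn ℂ h {w : ℂ | ‖w‖ < ρ₂ * c'} ∧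
      (∀ K : Set ℂ, IsCompact K →
        K ⊆ {z : ℂ | 0 < ‖z‖ ∧ ‖z‖ < ρ₂ * c} →
        TendstoUniformlyOn (fun k z => f (nk k) z) g atTop K) ∧
      (∀ K : Set ℂ, IsCompact K →
        K ⊆ {w : ℂ | 0 < ‖w‖ ∧ ‖w‖ < ρ₂ * c'} →
        TendstoUniformlyOn (fun k w => f (nk k) (t (nk k) / w)) h atTop K) ∧
      g 0 = h 0 :=
  normal_families_band_bounded_general c c' ρ₁ ρ₂ M hc hc' hρ₁ hρ hρ₂ t ht0 htlim htsmall f hf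
    hband_out hband_in
end

section
/- Let c, c' > 0, 0 < ρ₁ < ρ₂ < 1, M > 0, and let f : ℂ × ℂ → ℂ be holomorphic on V' = {(z, w) : 0 < |z| < c, 0 < |w| < c'}. Suppose |f(z, w)| ≤ M whenever (z, w) ∈ V' satisfies ρ₁c ≤ |z| ≤ ρ₂c, and |f(z, w)| ≤ M whenever (z, w) ∈ V' satisfies ρ₁c' ≤ |w| ≤ ρ₂c'. Then |f(z, w)| ≤ M for all (z, w) ∈ V' with |z| ≤ ρ₂c and |w| ≤ ρ₂c'. -/
/-!
Fix `(z, w) ∈ V'` and put `t = zw`. On the fiber over `t`, parametrized by `ζ ↦ (ζ, t / ζ)`,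
restrict to the closed annulus `|t| / (ρ₂c') ≤ |ζ| ≤ ρ₂c`; it contains `z` because
`|w| ≤ ρ₂c'`. Its outer circle lies in the band `|z| = ρ₂c` and its inner circle in the band
`|w| = ρ₂c'`, so the maximum principle on the annulus bounds `f(z, w)` by `M`.
-/

open Metric

theorem Complex.norm_le_in_annulus_of_norm_le_on_boundary
    {E F : Type*} [NormedAddCommGroup E] [NormedSpace ℂ E] [Nontrivial E]
    [NormedAddCommGroup F] [NormedSpace ℂ F] {g : E → F} {r R M : ℝ}
    (hg : DifferentiableOn ℂ g {x | r ≤ ‖x‖ ∧ ‖x‖ ≤ R})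
    (h_inner : ∀ x, ‖x‖ = r → ‖g x‖ ≤ M) (h_outer : ∀ x, ‖x‖ = R → ‖g x‖ ≤ M)
    {x : E} (hr : r ≤ ‖x‖) (hR : ‖x‖ ≤ R) : ‖g x‖ ≤ M := by
  set U : Set E := {x | r < ‖x‖ ∧ ‖x‖ < R}
  have hU_open : IsOpen U :=
    (isOpen_lt continuous_const continuous_norm).inter (isOpen_lt continuous_norm continuous_const)
  have hU_closure : closure U ⊆ {x | r ≤ ‖x‖ ∧ ‖x‖ ≤ R} :=
    closure_minimal (fun x hx => ⟨hx.1.le, hx.2.le⟩)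
      ((isClosed_le continuous_const continuous_norm).inter
        (isClosed_le continuous_norm continuous_const))
  have h_circles (y : E) (hr : r ≤ ‖y‖) (hR : ‖y‖ ≤ R) (hyU : y ∉ U) : ‖g y‖ ≤ M := by
    rcases hr.eq_or_lt with hr | hr
    · exact h_inner y hr.symm
    rcases hR.eq_or_lt with hR | hR
    · exact h_outer y hR
    exact absurd ⟨hr, hR⟩ hyU
  by_cases hxU : x ∈ U
  swap
  · exact h_circles x hr hR hxU
  refine norm_le_of_forall_mem_frontier_norm_le
    ((isBounded_ball (x := (0 : E)) (r := R)).subset fun y hy => by simpa using hy.2)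
    ⟨hg.mono fun y hy => ⟨hy.1.le, hy.2.le⟩, hg.continuousOn.mono hU_closure⟩
    (fun y hy => ?_) (subset_closure hxU)
  rw [hU_open.frontier_eq] at hy
  exact h_circles y (hU_closure hy.1).1 (hU_closure hy.1).2 hy.2

/-- The set `V'` of the nodal family: `V` with its zero fiber `{zw = 0}` removed. -/
def puncturedBidisc (c c' : ℝ) : Set (ℂ × ℂ) :=
  {p | 0 < ‖p.1‖ ∧ ‖p.1‖ < c ∧ 0 < ‖p.2‖ ∧ ‖p.2‖ < c'}

theorem isOpen_puncturedBidisc (c c' : ℝ) : IsOpen (puncturedBidisc c c') := by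
  have h₁ : Continuous fun p : ℂ × ℂ => ‖p.1‖ := continuous_fst.norm
  have h₂ : Continuous fun p : ℂ × ℂ => ‖p.2‖ := continuous_snd.norm
  exact (isOpen_lt continuous_const h₁).inter <| (isOpen_lt h₁ continuous_const).inter <|
    (isOpen_lt continuous_const h₂).inter (isOpen_lt h₂ continuous_const)

theorem fiber_mem_puncturedBidisc {c c' a b : ℝ} {t ζ : ℂ} (ht : t ≠ 0) (hb : 0 < b)
    (ha : a < c) (hb' : b < c') (hζ_inner : ‖t‖ / b ≤ ‖ζ‖) (hζ_outer : ‖ζ‖ ≤ a) :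
    (ζ, t / ζ) ∈ puncturedBidisc c c' ∧ ‖t / ζ‖ ≤ b := by
  have ht_pos : 0 < ‖t‖ := norm_pos_iff.mpr ht
  have hζ_pos : 0 < ‖ζ‖ := (div_pos ht_pos hb).trans_le hζ_inner
  have h_snd : ‖t / ζ‖ ≤ b := by
    rw [norm_div, div_le_iff₀ hζ_pos]
    rwa [div_le_iff₀ hb, mul_comm] at hζ_inner
  refine ⟨⟨hζ_pos, hζ_outer.trans_lt ha, ?_, h_snd.trans_lt hb'⟩, h_snd⟩
  rw [norm_div]
  exact div_pos ht_pos hζ_pos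

theorem nodal_family_band_bound_general
    (c c' ρ₁ ρ₂ M : ℝ)
    (hρ : ρ₁ < ρ₂) (hρ₂ : ρ₂ < 1)
    (f : ℂ × ℂ → ℂ)
    (hf : DifferentiableOn ℂ f
      {p : ℂ × ℂ | 0 < ‖p.1‖ ∧ ‖p.1‖ < c ∧
        0 < ‖p.2‖ ∧ ‖p.2‖ < c'})
    (hband_z : ∀ p : ℂ × ℂ,
      (0 < ‖p.1‖ ∧ ‖p.1‖ < c ∧
        0 < ‖p.2‖ ∧ ‖p.2‖ < c') →
      ρ₁ * c ≤ ‖p.1‖ → ‖p.1‖ ≤ ρ₂ * c → ‖f p‖ ≤ M)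
    (hband_w : ∀ p : ℂ × ℂ,
      (0 < ‖p.1‖ ∧ ‖p.1‖ < c ∧
        0 < ‖p.2‖ ∧ ‖p.2‖ < c') →
      ρ₁ * c' ≤ ‖p.2‖ → ‖p.2‖ ≤ ρ₂ * c' → ‖f p‖ ≤ M) :
    ∀ p : ℂ × ℂ,
      (0 < ‖p.1‖ ∧ ‖p.1‖ < c ∧
        0 < ‖p.2‖ ∧ ‖p.2‖ < c') →
      ‖p.1‖ ≤ ρ₂ * c → ‖p.2‖ ≤ ρ₂ * c' → ‖f p‖ ≤ M := by
  rintro ⟨z, w⟩ hp (hz : ‖z‖ ≤ ρ₂ * c) (hw : ‖w‖ ≤ ρ₂ * c')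
  obtain ⟨hz_pos, hzc, hw_pos, hwc'⟩ : 0 < ‖z‖ ∧ ‖z‖ < c ∧ 0 < ‖w‖ ∧ ‖w‖ < c' := hp
  have hc : 0 < c := hz_pos.trans hzc
  have hc' : 0 < c' := hw_pos.trans hwc'
  have hb : 0 < ρ₂ * c' := hw_pos.trans_le hw
  have hz₀ : z ≠ 0 := norm_pos_iff.mp hz_pos
  set t := z * w
  have ht : t ≠ 0 := mul_ne_zero hz₀ (norm_pos_iff.mp hw_pos)
  set r := ‖t‖ / (ρ₂ * c')
  have hr : r ≤ ‖z‖ := by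
    change ‖z * w‖ / _ ≤ _
    rw [norm_mul, mul_div_assoc]
    exact mul_le_of_le_one_right hz_pos.le ((div_le_one hb).mpr hw)
  have hfiber (ζ : ℂ) (h₁ : r ≤ ‖ζ‖) (h₂ : ‖ζ‖ ≤ ρ₂ * c) :=
    fiber_mem_puncturedBidisc ht hb (mul_lt_of_lt_one_left hc hρ₂)
      (mul_lt_of_lt_one_left hc' hρ₂) h₁ h₂
  set g : ℂ → ℂ := fun ζ => f (ζ, t / ζ)
  have hg : DifferentiableOn ℂ g {ζ | r ≤ ‖ζ‖ ∧ ‖ζ‖ ≤ ρ₂ * c} := by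
    intro ζ ⟨h₁, h₂⟩
    have hζ : ζ ≠ 0 := norm_pos_iff.mp (hfiber ζ h₁ h₂).1.1
    have hf_at := hf.differentiableAt ((isOpen_puncturedBidisc c c').mem_nhds (hfiber ζ h₁ h₂).1)
    exact (hf_at.comp ζ (differentiableAt_id.prodMk
      ((differentiableAt_const t).div differentiableAt_id hζ))).differentiableWithinAt
  have h_inner (ζ : ℂ) (hζ : ‖ζ‖ = r) : ‖g ζ‖ ≤ M := by
    have hζ_snd : ‖t / ζ‖ = ρ₂ * c' := by
      rw [norm_div, hζ, div_div_cancel₀ (norm_ne_zero_iff.mpr ht)]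
    exact hband_w _ (hfiber ζ hζ.ge (hζ ▸ hr.trans hz)).1
      (hζ_snd ▸ mul_le_mul_of_nonneg_right hρ.le hc'.le) hζ_snd.le
  have h_outer (ζ : ℂ) (hζ : ‖ζ‖ = ρ₂ * c) : ‖g ζ‖ ≤ M :=
    hband_z _ (hfiber ζ (hζ ▸ hr.trans hz) hζ.le).1
      (hζ ▸ mul_le_mul_of_nonneg_right hρ.le hc.le) hζ.le
  have hgz : g z = f (z, w) := by simp only [g, t, mul_div_cancel_left₀ w hz₀]
  exact hgz ▸ Complex.norm_le_in_annulus_of_norm_le_on_boundary hg h_inner h_outer hr hz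

/-- Maximum principle on the fibers of the nodal family: a holomorphic function on
`V' = {(z,w) : 0 < |z| < c, 0 < |w| < c'}` bounded by `M` on the band
`{ρ₁c ≤ |z| ≤ ρ₂c}` and on the band `{ρ₁c' ≤ |w| ≤ ρ₂c'}` is bounded by `M` on all of
`V' ∩ {|z| ≤ ρ₂c, |w| ≤ ρ₂c'}`. -/
theorem nodal_family_band_bound
    (c c' ρ₁ ρ₂ M : ℝ) (hc : 0 < c) (hc' : 0 < c')
    (hρ₁ : 0 < ρ₁) (hρ : ρ₁ < ρ₂) (hρ₂ : ρ₂ < 1) (hM : 0 < M)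
    (f : ℂ × ℂ → ℂ)
    (hf : DifferentiableOn ℂ f
      {p : ℂ × ℂ | 0 < ‖p.1‖ ∧ ‖p.1‖ < c ∧
        0 < ‖p.2‖ ∧ ‖p.2‖ < c'})
    (hband_z : ∀ p : ℂ × ℂ,
      (0 < ‖p.1‖ ∧ ‖p.1‖ < c ∧
        0 < ‖p.2‖ ∧ ‖p.2‖ < c') →
      ρ₁ * c ≤ ‖p.1‖ → ‖p.1‖ ≤ ρ₂ * c → ‖f p‖ ≤ M)
    (hband_w : ∀ p : ℂ × ℂ,
      (0 < ‖p.1‖ ∧ ‖p.1‖ < c ∧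
        0 < ‖p.2‖ ∧ ‖p.2‖ < c') →
      ρ₁ * c' ≤ ‖p.2‖ → ‖p.2‖ ≤ ρ₂ * c' → ‖f p‖ ≤ M) :
    ∀ p : ℂ × ℂ,
      (0 < ‖p.1‖ ∧ ‖p.1‖ < c ∧
        0 < ‖p.2‖ ∧ ‖p.2‖ < c') →
      ‖p.1‖ ≤ ρ₂ * c → ‖p.2‖ ≤ ρ₂ * c' → ‖f p‖ ≤ M :=
  nodal_family_band_bound_general c c' ρ₁ ρ₂ M hρ hρ₂ f hf hband_z hband_w
end

section
/- Let c, c' > 0, 0 < ρ₁ < ρ₂ < 1, M > 0, let S ⊆ ℂⁿ be open, and let f : ℂ × ℂ × ℂⁿ → ℂ be holomorphic on V' × S where V' = {(z, w) : 0 < |z| < c, 0 < |w| < c'}. Suppose that for all s ∈ S: |f(z, w, s)| ≤ M whenever ρ₁c ≤ |z| ≤ ρ₂c, and |f(z, w, s)| ≤ M whenever ρ₁c' ≤ |w| ≤ ρ₂c'. Then there exists a unique function F holomorphic on {(z, w) : |z| < ρ₂c, |w| < ρ₂c'} × S such that F = f on {(z, w) : 0 < |z| < ρ₂c, 0 < |w|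 < ρ₂c'} × S. -/
/-!
The singularity along each axis is removed by a Cauchy integral in that variable. For `w` in the
inner band, `z ↦ f (z, w, s)` is bounded on the punctured disc, so by the removable singularity
theorem it is reproduced by its Cauchy integral over `|ζ| = r`; this Cauchy transform is
holomorphic in all variables on `|z| < r` (differentiation under the integral sign), and the two
agree for every `w ≠ 0` by the identity theorem on the connected punctured `w`-disc. Running the
same argument in `w`, now with the outer band, removes the singularity along `w = 0`. Uniqueness
holds because `{z w ≠ 0}` is dense.
-/

open Metric Set Filter Complex Topology MeasureTheory
open scoped Real

theorem mem_ball_zero_sdiff_zero_iff {E : Type*} [NormedAddCommGroup E] {z : E} {R : ℝ} :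
    z ∈ ball 0 R \ {0} ↔ 0 < ‖z‖ ∧ ‖z‖ < R := by
  rw [Set.mem_sdiff, mem_ball_zero_iff, mem_singleton_iff, norm_pos_iff, and_comm]

theorem sphere_subset_ball_sdiff_singleton {X : Type*} [PseudoMetricSpace X] {x : X} {r R : ℝ}
    (hr : 0 < r) (hrR : r < R) : sphere x r ⊆ ball x R \ {x} := fun _ hy =>
  ⟨sphere_subset_ball hrR hy, ne_of_mem_sphere hy hr.ne'⟩

theorem Complex.exists_eventually_norm_mem_Ioo {a b : ℝ} (ha : 0 ≤ a) (hab : a < b) :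
    ∃ z₀ : ℂ, ∀ᶠ z in 𝓝 z₀, ‖z‖ ∈ Ioo a b := by
  obtain ⟨t, hat, htb⟩ := exists_between hab
  refine ⟨t, continuous_norm.continuousAt.eventually_mem (Ioo_mem_nhds ?_ ?_)⟩ <;>
    rwa [norm_real, Real.norm_of_nonneg (ha.trans hat.le)]

theorem Complex.isPreconnected_ball_zero_sdiff_zero {R : ℝ} (hR : 0 < R) :
    IsPreconnected (ball (0 : ℂ) R \ {0}) := by
  have himage : exp '' {w : ℂ | w.re < Real.log R} = ball 0 R \ {0} := by
    ext z
    simp only [mem_image, mem_ofPred_eq, Set.mem_sdiff, mem_ball_zero_iff, mem_singleton_iff]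
    constructor
    · rintro ⟨w, hw, rfl⟩
      exact ⟨by rwa [norm_exp, ← Real.lt_log_iff_exp_lt hR], exp_ne_zero w⟩
    · rintro ⟨hzR, hz⟩
      exact ⟨log z, by rwa [log_re, Real.log_lt_log_iff (norm_pos_iff.2 hz) hR], exp_log hz⟩
  rw [← himage]
  exact (convex_halfSpace_re_lt _).isPreconnected.image _ continuous_exp.continuousOn

theorem eqOn_of_eqOn_off_axes {X Y : Type*} [TopologicalSpace X] [TopologicalSpace Y]
    [T2Space Y] {Ω : Set (ℂ × ℂ × X)} (hΩ : IsOpen Ω) {F G : ℂ × ℂ × X → Y}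
    (hF : ContinuousOn F Ω) (hG : ContinuousOn G Ω)
    (h : EqOn F G (Ω ∩ ({0}ᶜ ×ˢ {0}ᶜ ×ˢ univ))) : EqOn F G Ω := by
  have hdense : Dense ({0}ᶜ ×ˢ {0}ᶜ ×ˢ univ : Set (ℂ × ℂ × X)) :=
    (dense_compl_singleton 0).prod ((dense_compl_singleton 0).prod dense_univ)
  exact h.of_subset_closure hF hG inter_subset_left (hdense.open_subset_closure_inter hΩ)

theorem IsCompact.exists_forall_mem_ball_mem_and_norm_le {X F : Type*} [PseudoMetricSpace X]
    [ProperSpace X] [SeminormedAddGroup F] {K U : Set X} {k : X → F}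
    (hK : IsCompact K) (hU : IsOpen U) (hKU : K ⊆ U) (hk : ContinuousOn k U) :
    ∃ δ > 0, ∃ C, ∀ x ∈ K, ∀ y ∈ ball x δ, y ∈ U ∧ ‖k y‖ ≤ C := by
  obtain ⟨δ, hδ, hδU⟩ := hK.exists_cthickening_subset_open hU hKU
  obtain ⟨C, hC⟩ := hK.cthickening.exists_bound_of_continuousOn (hk.mono hδU)
  have hmem : ∀ x ∈ K, ∀ y ∈ ball x δ, y ∈ cthickening δ K := fun x hx y hy =>
    mem_cthickening_of_dist_le y x δ K hx (mem_ball.1 hy).le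
  exact ⟨δ, hδ, C, fun x hx y hy => ⟨hδU (hmem x hx y hy), hC y (hmem x hx y hy)⟩⟩

section

variable {H E : Type*} [NormedAddCommGroup H] [NormedSpace ℂ H]
  [NormedAddCommGroup E] [NormedSpace ℂ E]

theorem norm_fderiv_le_of_forall_mem_ball_norm_le {k : H → E} {q : H} {ε C : ℝ} (hε : 0 < ε)
    (hk : DifferentiableOn ℂ k (ball q ε)) (hC : ∀ y ∈ ball q ε, ‖k y‖ ≤ C) :
    ‖fderiv ℂ k q‖ ≤ 2 * C / ε := by
  refine norm_fderiv_le_div_of_mapsTo_ball hk (fun y hy => ?_) hε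
  rw [mem_closedBall, dist_eq_norm, two_mul]
  exact (norm_sub_le _ _).trans (add_le_add (hC y hy) (hC q (mem_ball_self hε)))

variable [CompleteSpace E]

theorem Complex.two_pi_I_inv_smul_circleIntegral_sub_inv_smul_of_bddAbove {g : ℂ → E}
    {c z : ℂ} {r R : ℝ} (hg : DifferentiableOn ℂ g (ball c R \ {c}))
    (hb : BddAbove (norm ∘ g '' (ball c R \ {c}))) (hrR : r < R) (hz : z ∈ ball c r \ {c}) :
    (2 * π * I)⁻¹ • ∮ ζ in C(c, r), (ζ - z)⁻¹ • g ζ = g z := by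
  have hr : 0 < r := pos_of_mem_ball hz.1
  set G := Function.update g c (limUnder (𝓝[≠] c) g)
  have hGg : ∀ ζ ≠ c, G ζ = g ζ := fun ζ hζ => Function.update_of_ne hζ _ _
  have hG : DiffContOnCl ℂ G (ball c r) := by
    refine ((differentiableOn_update_limUnder_of_bddAbove (ball_mem_nhds c (hr.trans hrR))
      hg hb).mono ?_).diffContOnCl
    rw [closure_ball c hr.ne']
    exact closedBall_subset_ball hrR
  have hcongr : (∮ ζ in C(c, r), (ζ - z)⁻¹ • g ζ) = ∮ ζ in C(c, r), (ζ - z)⁻¹ • G ζ :=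
    circleIntegral.integral_congr hr.le fun ζ hζ => by rw [hGg ζ (ne_of_mem_sphere hζ hr.ne')]
  rw [hcongr, hG.two_pi_i_inv_smul_circleIntegral_sub_inv_smul hz.1, hGg z hz.2]

variable [FiniteDimensional ℂ H] [SecondCountableTopology E]

theorem differentiableAt_circleIntegral_of_differentiableOn {k : ℂ × H → E}
    {U : Set (ℂ × H)} (hk : DifferentiableOn ℂ k U) (hU : IsOpen U) {c : ℂ} {R : ℝ} {p₀ : H}
    (hsub : sphere c |R| ×ˢ {p₀} ⊆ U) :
    DifferentiableAt ℂ (fun p => ∮ ζ in C(c, R), k (ζ, p)) p₀ := by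
  obtain ⟨δ, hδ, C, hC⟩ := ((isCompact_sphere c |R|).prod
    isCompact_singleton).exists_forall_mem_ball_mem_and_norm_le hU hsub hk.continuousOn
  set ε := δ / 2
  have hε : 0 < ε := half_pos hδ
  set γ := circleMap c R
  have hball : ∀ θ, ∀ p ∈ ball p₀ ε, ∀ y ∈ ball (γ θ, p) ε, y ∈ U ∧ ‖k y‖ ≤ C := by
    intro θ p hp y hy
    refine hC (γ θ, p₀) ⟨circleMap_mem_sphere' c R θ, rfl⟩ y ?_
    calc dist y (γ θ, p₀) ≤ dist y (γ θ, p) + dist (γ θ, p) (γ θ, p₀) := dist_triangle _ _ _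
      _ < ε + ε := add_lt_add hy (by simpa [Prod.dist_eq] using hp)
      _ = δ := add_halves δ
  set L : ℝ → H → (H →L[ℂ] E) := fun θ p =>
    deriv γ θ • (fderiv ℂ k (γ θ, p)).comp (ContinuousLinearMap.inr ℂ ℂ H)
  have hdiff : ∀ θ, ∀ p ∈ ball p₀ ε, HasFDerivAt (fun p => deriv γ θ • k (γ θ, p)) (L θ p) p := by
    intro θ p hp
    have hkd : DifferentiableAt ℂ k (γ θ, p) :=
      hk.differentiableAt (hU.mem_nhds (hball θ p hp _ (mem_ball_self hε)).1)
    exact (hkd.hasFDerivAt.comp p (hasFDerivAt_prodMk_right (γ θ) p)).const_smul (deriv γ θ)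
  -- Cauchy estimates on the `ε`-balls bound the derivative uniformly.
  have hbound : ∀ θ, ∀ p ∈ ball p₀ ε, ‖L θ p‖ ≤ |R| * (2 * C / ε) := by
    intro θ p hp
    have hkp := norm_fderiv_le_of_forall_mem_ball_norm_le hε
      (fun y hy => (hk.differentiableAt (hU.mem_nhds (hball θ p hp y hy).1)).differentiableWithinAt)
      (fun y hy => (hball θ p hp y hy).2)
    rw [norm_smul, deriv_circleMap, norm_mul, norm_circleMap_zero, norm_I, mul_one]
    gcongr
    exact (ContinuousLinearMap.opNorm_comp_le _ _).trans
      (by grw [ContinuousLinearMap.norm_inr_le_one, mul_one, hkp])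
  have hγ' : Continuous (deriv γ) := by
    rw [funext (deriv_circleMap c R)]
    exact (continuous_circleMap 0 R).mul continuous_const
  have hcont : ∀ p ∈ ball p₀ ε, Continuous fun θ => deriv γ θ • k (γ θ, p) := fun p hp =>
    hγ'.smul (hk.continuousOn.comp_continuous (by fun_prop) fun θ =>
      (hball θ p hp _ (mem_ball_self hε)).1)
  -- `fderiv ℂ k` is Borel measurable on all of `ℂ × H`, so no continuity of `L` in `θ` is needed.
  have hmeas : Measurable fun θ => L θ p₀ := by
    borelize (ℂ × H)
    have hcomp : Continuous fun A : ℂ × H →L[ℂ] E => A.comp (ContinuousLinearMap.inr ℂ ℂ H) := by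
      fun_prop
    exact hγ'.measurable.smul (hcomp.measurable.comp ((measurable_fderiv ℂ k).comp
      ((continuous_circleMap c R).prodMk continuous_const).measurable))
  exact (intervalIntegral.hasFDerivAt_integral_of_dominated_of_fderiv_le (ball_mem_nhds p₀ hε)
    (eventually_of_mem (ball_mem_nhds p₀ hε) fun p hp => (hcont p hp).aestronglyMeasurable)
    ((hcont p₀ (mem_ball_self hε)).intervalIntegrable _ _) hmeas.aestronglyMeasurable
    (ae_of_all _ fun θ _ => hbound θ) intervalIntegrable_const
    (ae_of_all _ fun θ _ => hdiff θ)).differentiableAt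

noncomputable def cauchyTransform (f : ℂ × H → E) (r : ℝ) (p : ℂ × H) : E :=
  (2 * π * I)⁻¹ • ∮ ζ in C(0, r), (ζ - p.1)⁻¹ • f (ζ, p.2)

theorem differentiableOn_cauchyTransform {f : ℂ × H → E} {U : Set (ℂ × H)}
    (hf : DifferentiableOn ℂ f U) (hU : IsOpen U) {r : ℝ} {V : Set H}
    (hV : sphere 0 r ×ˢ V ⊆ U) :
    DifferentiableOn ℂ (cauchyTransform f r) (ball 0 r ×ˢ V) := by
  rintro ⟨z, x⟩ ⟨hz, hx⟩
  have hr : 0 < r := pos_of_mem_ball hz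
  set U' : Set (ℂ × ℂ × H) := {y | y.1 ≠ y.2.1 ∧ (y.1, y.2.2) ∈ U}
  have hU' : IsOpen U' :=
    (isOpen_ne_fun continuous_fst continuous_snd.fst).inter
      (hU.preimage (continuous_fst.prodMk continuous_snd.snd))
  have hk : DifferentiableOn ℂ (fun y : ℂ × ℂ × H => (y.1 - y.2.1)⁻¹ • f (y.1, y.2.2)) U' :=
    ((differentiableOn_fst.sub differentiableOn_snd.fst).inv fun y hy => sub_ne_zero.2 hy.1).smul
      (hf.comp (differentiableOn_fst.prodMk differentiableOn_snd.snd) fun y hy => hy.2)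
  have hsub : sphere 0 |r| ×ˢ {(z, x)} ⊆ U' := by
    rintro ⟨ζ, p⟩ ⟨hζ, rfl⟩
    rw [abs_of_pos hr] at hζ
    refine ⟨fun h => ?_, hV ⟨hζ, hx⟩⟩
    rw [mem_sphere_zero_iff_norm] at hζ
    exact (mem_ball_zero_iff.1 hz).ne (h ▸ hζ)
  exact ((differentiableAt_circleIntegral_of_differentiableOn hk hU' hsub).const_smul
    _).differentiableWithinAt

theorem eqOn_cauchyTransform {f : ℂ × ℂ × H → E} {R r : ℝ} {W : Set ℂ} {S : Set H}
    (hrR : r < R) (hW : IsOpen W) (hWc : IsPreconnected W) (hS : IsOpen S)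
    (hf : DifferentiableOn ℂ f ((ball 0 R \ {0}) ×ˢ W ×ˢ S)) {w₀ : ℂ} (hw₀ : w₀ ∈ W)
    (hbdd : ∀ᶠ w in 𝓝 w₀, ∀ s ∈ S,
      BddAbove (norm ∘ (fun z => f (z, w, s)) '' (ball 0 R \ {0}))) :
    EqOn (cauchyTransform f r) f ((ball 0 r \ {0}) ×ˢ W ×ˢ S) := by
  rintro ⟨z, w, s⟩ ⟨hz, hw, hs⟩
  have hT : DifferentiableOn ℂ (cauchyTransform f r) (ball 0 r ×ˢ W ×ˢ S) :=
    differentiableOn_cauchyTransform hf ((isOpen_ball.sdiff isClosed_singleton).prod (hW.prod hS))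
      (prod_mono (sphere_subset_ball_sdiff_singleton (pos_of_mem_ball hz.1) hrR) subset_rfl)
  have hzW : Differentiable ℂ fun w' : ℂ => (z, w', s) := by fun_prop
  have hfz : DifferentiableOn ℂ (fun w' => f (z, w', s)) W :=
    hf.comp hzW.differentiableOn fun w' hw' => ⟨⟨ball_subset_ball hrR.le hz.1, hz.2⟩, hw', hs⟩
  have hTz : DifferentiableOn ℂ (fun w' => cauchyTransform f r (z, w', s)) W :=
    hT.comp hzW.differentiableOn fun w' hw' => ⟨hz.1, hw', hs⟩
  refine (hTz.analyticOnNhd hW).eqOn_of_preconnected_of_eventuallyEq (hfz.analyticOnNhd hW) hWc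
    hw₀ ?_ hw
  filter_upwards [hbdd, hW.mem_nhds hw₀] with w' hb hw'
  have hζw : Differentiable ℂ fun ζ : ℂ => (ζ, w', s) := by fun_prop
  exact two_pi_I_inv_smul_circleIntegral_sub_inv_smul_of_bddAbove
    (hf.comp hζw.differentiableOn fun ζ hζ => ⟨hζ, hw', hs⟩) (hb s hs) hrR hz

theorem exists_differentiableOn_eqOn_of_bddAbove {f : ℂ × ℂ × H → E} {R R' r r' : ℝ}
    {S : Set H} (hrR : r < R) (hrR' : r' < R') (hS : IsOpen S)
    (hf : DifferentiableOn ℂ f ((ball 0 R \ {0}) ×ˢ (ball 0 R' \ {0}) ×ˢ S))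
    {z₀ w₀ : ℂ} (hz₀ : z₀ ∈ ball 0 r \ {0}) (hw₀ : w₀ ∈ ball 0 r' \ {0})
    (hbdd_z : ∀ᶠ z in 𝓝 z₀, ∀ s ∈ S,
      BddAbove (norm ∘ (fun w => f (z, w, s)) '' (ball 0 R' \ {0})))
    (hbdd_w : ∀ᶠ w in 𝓝 w₀, ∀ s ∈ S,
      BddAbove (norm ∘ (fun z => f (z, w, s)) '' (ball 0 R \ {0}))) :
    ∃ F, DifferentiableOn ℂ F (ball 0 r ×ˢ ball 0 r' ×ˢ S) ∧
      EqOn F f ((ball 0 r \ {0}) ×ˢ (ball 0 r' \ {0}) ×ˢ S) := by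
  have hpunct : ∀ ρ : ℝ, IsOpen (ball (0 : ℂ) ρ \ {0}) := fun _ =>
    isOpen_ball.sdiff isClosed_singleton
  have hw₀' : w₀ ∈ ball 0 R' \ {0} := ⟨ball_subset_ball hrR'.le hw₀.1, hw₀.2⟩
  set F₁ := cauchyTransform f r
  have hF₁ : DifferentiableOn ℂ F₁ (ball 0 r ×ˢ (ball 0 R' \ {0}) ×ˢ S) :=
    differentiableOn_cauchyTransform hf ((hpunct R).prod ((hpunct R').prod hS))
      (prod_mono (sphere_subset_ball_sdiff_singleton (pos_of_mem_ball hz₀.1) hrR) subset_rfl)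
  have hF₁f : EqOn F₁ f ((ball 0 r \ {0}) ×ˢ (ball 0 R' \ {0}) ×ˢ S) :=
    eqOn_cauchyTransform hrR (hpunct R') (isPreconnected_ball_zero_sdiff_zero
      (pos_of_mem_ball hw₀'.1)) hS hf hw₀' hbdd_w
  set swap : ℂ × ℂ × H → ℂ × ℂ × H := fun q => (q.2.1, q.1, q.2.2)
  have hswap : Differentiable ℂ swap := by fun_prop
  have hg : DifferentiableOn ℂ (F₁ ∘ swap) ((ball 0 R' \ {0}) ×ˢ ball 0 r ×ˢ S) :=
    hF₁.comp hswap.differentiableOn fun q hq => ⟨hq.2.1, hq.1, hq.2.2⟩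
  have hgbdd : ∀ᶠ z in 𝓝 z₀, ∀ s ∈ S,
      BddAbove (norm ∘ (fun w => (F₁ ∘ swap) (w, z, s)) '' (ball 0 R' \ {0})) := by
    filter_upwards [hbdd_z, (hpunct r).mem_nhds hz₀] with z hb hz s hs
    convert hb s hs using 1
    exact image_congr fun w hw => congrArg norm (hF₁f (x := (z, w, s)) ⟨hz, hw, hs⟩)
  refine ⟨cauchyTransform (F₁ ∘ swap) r' ∘ swap, ?_, ?_⟩
  · exact (differentiableOn_cauchyTransform hg ((hpunct R').prod (isOpen_ball.prod hS))
      (prod_mono (sphere_subset_ball_sdiff_singleton (pos_of_mem_ball hw₀.1) hrR') subset_rfl)).comp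
      hswap.differentiableOn fun q hq => ⟨hq.2.1, hq.1, hq.2.2⟩
  · rintro ⟨z, w, s⟩ ⟨hz, hw, hs⟩
    refine (eqOn_cauchyTransform hrR' isOpen_ball (convex_ball 0 r).isPreconnected hS hg hz₀.1
      hgbdd (x := (w, z, s)) ⟨hw, hz.1, hs⟩).trans ?_
    exact hF₁f ⟨hz, ⟨ball_subset_ball hrR'.le hw.1, hw.2⟩, hs⟩

end

theorem families_holomorphic_extension_general
    (c c' ρ₁ ρ₂ M : ℝ) (hc : 0 < c) (hc' : 0 < c')
    (hρ₁ : 0 < ρ₁) (hρ : ρ₁ < ρ₂) (hρ₂ : ρ₂ < 1)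
    (n : ℕ) (S : Set (Fin n → ℂ)) (hS : IsOpen S)
    (f : ℂ × ℂ × (Fin n → ℂ) → ℂ)
    (hf : DifferentiableOn ℂ f
      {q : ℂ × ℂ × (Fin n → ℂ) | (0 < ‖q.1‖ ∧ ‖q.1‖ < c) ∧
        (0 < ‖q.2.1‖ ∧ ‖q.2.1‖ < c') ∧ q.2.2 ∈ S})
    (hband_z : ∀ q : ℂ × ℂ × (Fin n → ℂ),
      ((0 < ‖q.1‖ ∧ ‖q.1‖ < c) ∧
        (0 < ‖q.2.1‖ ∧ ‖q.2.1‖ < c') ∧ q.2.2 ∈ S) →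
      ρ₁ * c ≤ ‖q.1‖ → ‖q.1‖ ≤ ρ₂ * c → ‖f q‖ ≤ M)
    (hband_w : ∀ q : ℂ × ℂ × (Fin n → ℂ),
      ((0 < ‖q.1‖ ∧ ‖q.1‖ < c) ∧
        (0 < ‖q.2.1‖ ∧ ‖q.2.1‖ < c') ∧ q.2.2 ∈ S) →
      ρ₁ * c' ≤ ‖q.2.1‖ → ‖q.2.1‖ ≤ ρ₂ * c' →
      ‖f q‖ ≤ M) :
    ∃ F : ℂ × ℂ × (Fin n → ℂ) → ℂ,
      (DifferentiableOn ℂ F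
        {q : ℂ × ℂ × (Fin n → ℂ) | ‖q.1‖ < ρ₂ * c ∧
          ‖q.2.1‖ < ρ₂ * c' ∧ q.2.2 ∈ S} ∧
        ∀ q : ℂ × ℂ × (Fin n → ℂ),
          (0 < ‖q.1‖ ∧ ‖q.1‖ < ρ₂ * c) →
          (0 < ‖q.2.1‖ ∧ ‖q.2.1‖ < ρ₂ * c') → q.2.2 ∈ S →
          F q = f q) ∧
      ∀ G : ℂ × ℂ × (Fin n → ℂ) → ℂ,
        (DifferentiableOn ℂ G
          {q : ℂ × ℂ × (Fin n → ℂ) | ‖q.1‖ < ρ₂ * c ∧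
            ‖q.2.1‖ < ρ₂ * c' ∧ q.2.2 ∈ S} ∧
          ∀ q : ℂ × ℂ × (Fin n → ℂ),
            (0 < ‖q.1‖ ∧ ‖q.1‖ < ρ₂ * c) →
            (0 < ‖q.2.1‖ ∧ ‖q.2.1‖ < ρ₂ * c') → q.2.2 ∈ S →
            G q = f q) →
        ∀ q : ℂ × ℂ × (Fin n → ℂ),
          ‖q.1‖ < ρ₂ * c → ‖q.2.1‖ < ρ₂ * c' → q.2.2 ∈ S →
          G q = F q := by
  obtain ⟨r, hρr, hrc⟩ := exists_between (mul_lt_of_lt_one_left hc hρ₂)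
  obtain ⟨r', hρr', hrc'⟩ := exists_between (mul_lt_of_lt_one_left hc' hρ₂)
  have hρ₁c := mul_pos hρ₁ hc
  have hρ₁c' := mul_pos hρ₁ hc'
  obtain ⟨z₀, hz₀⟩ := exists_eventually_norm_mem_Ioo hρ₁c.le (mul_lt_mul_of_pos_right hρ hc)
  obtain ⟨w₀, hw₀⟩ := exists_eventually_norm_mem_Ioo hρ₁c'.le (mul_lt_mul_of_pos_right hρ hc')
  have hmem := @mem_ball_zero_sdiff_zero_iff ℂ _
  obtain ⟨F, hF, hFf⟩ := exists_differentiableOn_eqOn_of_bddAbove hrc hrc' hS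
    (hf.mono fun q ⟨hz, hw, hs⟩ => ⟨hmem.1 hz, hmem.1 hw, hs⟩)
    (hmem.2 ⟨hρ₁c.trans hz₀.self_of_nhds.1, hz₀.self_of_nhds.2.trans hρr⟩)
    (hmem.2 ⟨hρ₁c'.trans hw₀.self_of_nhds.1, hw₀.self_of_nhds.2.trans hρr'⟩)
    (hz₀.mono fun z hz s hs => ⟨M, forall_mem_image.2 fun w hw => hband_z (z, w, s)
      ⟨⟨hρ₁c.trans hz.1, hz.2.trans (hρr.trans hrc)⟩, hmem.1 hw, hs⟩ hz.1.le hz.2.le⟩)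
    (hw₀.mono fun w hw s hs => ⟨M, forall_mem_image.2 fun z hz => hband_w (z, w, s)
      ⟨hmem.1 hz, ⟨hρ₁c'.trans hw.1, hw.2.trans (hρr'.trans hrc')⟩, hs⟩ hw.1.le hw.2.le⟩)
  have hΩ : {q : ℂ × ℂ × (Fin n → ℂ) | ‖q.1‖ < ρ₂ * c ∧ ‖q.2.1‖ < ρ₂ * c' ∧ q.2.2 ∈ S} ⊆
      ball 0 r ×ˢ ball 0 r' ×ˢ S := fun q ⟨hz, hw, hs⟩ =>
    ⟨mem_ball_zero_iff.2 (hz.trans hρr), mem_ball_zero_iff.2 (hw.trans hρr'), hs⟩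
  have hFf' : ∀ q : ℂ × ℂ × (Fin n → ℂ), (0 < ‖q.1‖ ∧ ‖q.1‖ < ρ₂ * c) →
      (0 < ‖q.2.1‖ ∧ ‖q.2.1‖ < ρ₂ * c') → q.2.2 ∈ S → F q = f q := fun q hz hw hs =>
    hFf ⟨hmem.2 ⟨hz.1, hz.2.trans hρr⟩, hmem.2 ⟨hw.1, hw.2.trans hρr'⟩, hs⟩
  refine ⟨F, ⟨hF.mono hΩ, hFf'⟩, fun G ⟨hG, hGf⟩ q hz hw hs => ?_⟩
  refine eqOn_of_eqOn_off_axes ?_ hG.continuousOn (hF.mono hΩ).continuousOn ?_ ⟨hz, hw, hs⟩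
  · exact (isOpen_lt continuous_norm continuous_const).prod
      ((isOpen_lt continuous_norm continuous_const).prod hS)
  · rintro p ⟨⟨hpz, hpw, hps⟩, hz0, hw0, -⟩
    rw [hGf p ⟨norm_pos_iff.2 hz0, hpz⟩ ⟨norm_pos_iff.2 hw0, hpw⟩ hps,
      hFf' p ⟨norm_pos_iff.2 hz0, hpz⟩ ⟨norm_pos_iff.2 hw0, hpw⟩ hps]

/-- Families holomorphic extension lemma (coefficient version): a coefficient function
`f(z,w,s)` holomorphic on `V' × S`, bounded uniformly in the parameter `s` by `M` on the
outer band `{ρ₁c ≤ |z| ≤ ρ₂c}` and on the inner band `{ρ₁c' ≤ |w| ≤ ρ₂c'}`, extends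
uniquely to a holomorphic function on `{|z| < ρ₂c, |w| < ρ₂c'} × S`. -/
theorem families_holomorphic_extension
    (c c' ρ₁ ρ₂ M : ℝ) (hc : 0 < c) (hc' : 0 < c')
    (hρ₁ : 0 < ρ₁) (hρ : ρ₁ < ρ₂) (hρ₂ : ρ₂ < 1) (hM : 0 < M)
    (n : ℕ) (S : Set (Fin n → ℂ)) (hS : IsOpen S)
    (f : ℂ × ℂ × (Fin n → ℂ) → ℂ)
    (hf : DifferentiableOn ℂ f
      {q : ℂ × ℂ × (Fin n → ℂ) | (0 < ‖q.1‖ ∧ ‖q.1‖ < c) ∧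
        (0 < ‖q.2.1‖ ∧ ‖q.2.1‖ < c') ∧ q.2.2 ∈ S})
    (hband_z : ∀ q : ℂ × ℂ × (Fin n → ℂ),
      ((0 < ‖q.1‖ ∧ ‖q.1‖ < c) ∧
        (0 < ‖q.2.1‖ ∧ ‖q.2.1‖ < c') ∧ q.2.2 ∈ S) →
      ρ₁ * c ≤ ‖q.1‖ → ‖q.1‖ ≤ ρ₂ * c → ‖f q‖ ≤ M)
    (hband_w : ∀ q : ℂ × ℂ × (Fin n → ℂ),
      ((0 < ‖q.1‖ ∧ ‖q.1‖ < c) ∧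
        (0 < ‖q.2.1‖ ∧ ‖q.2.1‖ < c') ∧ q.2.2 ∈ S) →
      ρ₁ * c' ≤ ‖q.2.1‖ → ‖q.2.1‖ ≤ ρ₂ * c' →
      ‖f q‖ ≤ M) :
    ∃ F : ℂ × ℂ × (Fin n → ℂ) → ℂ,
      (DifferentiableOn ℂ F
        {q : ℂ × ℂ × (Fin n → ℂ) | ‖q.1‖ < ρ₂ * c ∧
          ‖q.2.1‖ < ρ₂ * c' ∧ q.2.2 ∈ S} ∧
        ∀ q : ℂ × ℂ × (Fin n → ℂ),
          (0 < ‖q.1‖ ∧ ‖q.1‖ < ρ₂ * c) →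
          (0 < ‖q.2.1‖ ∧ ‖q.2.1‖ < ρ₂ * c') → q.2.2 ∈ S →
          F q = f q) ∧
      ∀ G : ℂ × ℂ × (Fin n → ℂ) → ℂ,
        (DifferentiableOn ℂ G
          {q : ℂ × ℂ × (Fin n → ℂ) | ‖q.1‖ < ρ₂ * c ∧
            ‖q.2.1‖ < ρ₂ * c' ∧ q.2.2 ∈ S} ∧
          ∀ q : ℂ × ℂ × (Fin n → ℂ),
            (0 < ‖q.1‖ ∧ ‖q.1‖ < ρ₂ * c) →
            (0 < ‖q.2.1‖ ∧ ‖q.2.1‖ < ρ₂ * c') → q.2.2 ∈ S →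
            G q = f q) →
        ∀ q : ℂ × ℂ × (Fin n → ℂ),
          ‖q.1‖ < ρ₂ * c → ‖q.2.1‖ < ρ₂ * c' → q.2.2 ∈ S →
          G q = F q :=
  families_holomorphic_extension_general c c' ρ₁ ρ₂ M hc hc' hρ₁ hρ hρ₂ n S hS f hf hband_z hband_w
end

section
/- Let c, c' > 0, 0 < ρ₁ < ρ₂ < 1, M > 0, m a natural number, and let f : ℂ × ℂ → ℂ be holomorphic on V' = {(z, w) : 0 < |z| < c, 0 < |w| < c'}. Suppose |f(z, w)| ≤ M whenever (z, w) ∈ V' satisfies ρ₁c ≤ |z| ≤ ρ₂c, and |f(z, w)| ≤ M·|zw|^{−m} whenever (z, w) ∈ V' satisfies ρ₁c' ≤ |w| ≤ ρ₂c'. Then there exists a unique function F holomorphic on the polydisc {(z, w) : |z| < ρ₂c, |w| < ρ₂c'} such that F(z, w) = z^m · f(z, w) for all (z, w) with 0 < |z| < ρ₂c and 0 < |w| < ρ₂c'. -/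
/-!
With `g (z, w) = z ^ m * f (z, w)`, `r = ρ₂ c` and `s = ρ₂ c'`, the extension is the iterated
Cauchy integral `F (z, w) = (2πi)⁻² ∮_{|ζ| = r} ∮_{|η| = s} g (ζ, η) / ((ζ - z) (η - w))`. By
Fubini it is an integral over the torus of a kernel that is smooth in `(z, w)`, so it is
holomorphic on the polydisc. For `|ζ| = r` the first band estimate bounds `g (ζ, ·)`, so its
singularity at `0` is removable and the inner integral returns `g (ζ, w)`. For `ρ₁ c' < |w| < s`
the second band estimate gives `|g (·, w)| ≤ M / |w| ^ m`, so the outer integral returns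
`g (z, w)`. The identity theorem in `w` on the punctured disc, which is connected, gives `F = g` on
the punctured polydisc; uniqueness follows by density.
-/

open Complex Metric Set MeasureTheory Filter Function
open scoped Real Topology

theorem differentiableOn_setIntegral_of_continuousOn_hasFDerivAt
    {𝕜 H F Y : Type*} [RCLike 𝕜] [NormedAddCommGroup H] [NormedSpace 𝕜 H]
    [LocallyCompactSpace H] [NormedAddCommGroup F] [NormedSpace ℝ F] [NormedSpace 𝕜 F]
    [TopologicalSpace Y] [T2Space Y] [SecondCountableTopology Y] [MeasurableSpace Y]
    [OpensMeasurableSpace Y] {μ : Measure Y} [IsFiniteMeasureOnCompacts μ]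
    {K : H → Y → F} {K' : H → Y → H →L[𝕜] F} {U : Set H} {s : Set Y}
    (hU : IsOpen U) (hs : IsCompact s) (hK : ContinuousOn (uncurry K) (U ×ˢ s))
    (hK' : ContinuousOn (uncurry K') (U ×ˢ s))
    (hderiv : ∀ x ∈ U, ∀ y ∈ s, HasFDerivAt (K · y) (K' x y) x) :
    DifferentiableOn 𝕜 (fun x ↦ ∫ y in s, K x y ∂μ) U := by
  intro x₀ hx₀
  obtain ⟨t, ht, htU, htc⟩ := local_compact_nhds (hU.mem_nhds hx₀)
  obtain ⟨C, hC⟩ := (htc.prod hs).exists_bound_of_continuousOn (hK'.mono (prod_mono htU le_rfl))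
  have hsm : MeasurableSet s := hs.isClosed.measurableSet
  have hKx : ∀ x ∈ U, ContinuousOn (K x) s := fun x hx ↦
    hK.comp (continuousOn_const.prodMk continuousOn_id) fun _ hy ↦ ⟨hx, hy⟩
  have hK'x₀ : ContinuousOn (K' x₀) s :=
    hK'.comp (continuousOn_const.prodMk continuousOn_id) fun _ hy ↦ ⟨hx₀, hy⟩
  have hbound : ∀ᵐ y ∂(μ.restrict s), ∀ x ∈ t, ‖K' x y‖ ≤ C :=
    (ae_restrict_iff' hsm).2 <| ae_of_all _ fun y hy x hx ↦ hC (x, y) ⟨hx, hy⟩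
  have hderiv' : ∀ᵐ y ∂(μ.restrict s), ∀ x ∈ t, HasFDerivAt (K · y) (K' x y) x :=
    (ae_restrict_iff' hsm).2 <| ae_of_all _ fun y hy x hx ↦ hderiv x (htU hx) y hy
  exact (hasFDerivAt_integral_of_dominated_of_fderiv_le ht
    (eventually_of_mem ht fun x hx ↦ (hKx x (htU hx)).aestronglyMeasurable hsm)
    ((hKx x₀ hx₀).integrableOn_compact hs) (hK'x₀.aestronglyMeasurable hsm) hbound
    (integrableOn_const hs.measure_lt_top.ne) hderiv').differentiableAt.differentiableWithinAt

theorem differentiableOn_setIntegral_smul_of_contDiffOn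
    {𝕜 H E Y : Type*} [RCLike 𝕜] [NormedAddCommGroup H] [NormedSpace 𝕜 H]
    [LocallyCompactSpace H] [NormedAddCommGroup E] [NormedSpace ℝ E] [NormedSpace 𝕜 E]
    [TopologicalSpace Y] [T2Space Y] [SecondCountableTopology Y] [MeasurableSpace Y]
    [OpensMeasurableSpace Y] {μ : Measure Y} [IsFiniteMeasureOnCompacts μ]
    {Φ : H → 𝕜} {D : Set H} (hD : IsOpen D) (hΦ : ContDiffOn 𝕜 1 Φ D)
    {q : Y → H} (hq : Continuous q) {G : Y → E} (hG : Continuous G)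
    {U : Set H} (hU : IsOpen U) {s : Set Y} (hs : IsCompact s)
    (hUD : ∀ p ∈ U, ∀ y ∈ s, q y - p ∈ D) :
    DifferentiableOn 𝕜 (fun p ↦ ∫ y in s, Φ (q y - p) • G y ∂μ) U := by
  have hkernel : Continuous fun x : H × Y ↦ q x.2 - x.1 := by fun_prop
  have hkernel_mem : MapsTo (fun x : H × Y ↦ q x.2 - x.1) (U ×ˢ s) D :=
    fun x hx ↦ hUD x.1 hx.1 x.2 hx.2
  refine differentiableOn_setIntegral_of_continuousOn_hasFDerivAt
    (K' := fun p y ↦ (-fderiv 𝕜 Φ (q y - p)).smulRight (G y)) hU hs ?_ ?_ ?_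
  · exact (hΦ.continuousOn.comp hkernel.continuousOn hkernel_mem).smul
      (hG.comp continuous_snd).continuousOn
  · exact (ContinuousLinearMap.smulRightL 𝕜 H E).continuous₂.comp_continuousOn
      (((hΦ.continuousOn_fderiv_of_isOpen hD le_rfl).comp hkernel.continuousOn
        hkernel_mem).neg.prodMk (hG.comp continuous_snd).continuousOn)
  · intro p hp y hy
    have hΦd : DifferentiableAt 𝕜 Φ (q y - p) :=
      (hΦ.differentiableOn one_ne_zero _ (hUD p hp y hy)).differentiableAt
        (hD.mem_nhds (hUD p hp y hy))
    simpa using (hΦd.hasFDerivAt.comp p ((hasFDerivAt_id p).const_sub (q y))).smul_const (G y)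

theorem isPreconnected_ball_diff_singleton {F : Type*} [NormedAddCommGroup F] [NormedSpace ℝ F]
    (h : 1 < Module.rank ℝ F) (c : F) (R : ℝ) : IsPreconnected (ball c R \ {c}) := by
  have hpolar : ball c R \ {c} = (fun q : ℝ × F ↦ c + q.1 • q.2) '' (Ioo 0 R ×ˢ sphere 0 1) := by
    ext x
    constructor
    · rintro ⟨hxR, hxc⟩
      have hpos : 0 < ‖x - c‖ := norm_pos_iff.2 (sub_ne_zero.2 hxc)
      refine ⟨(‖x - c‖, ‖x - c‖⁻¹ • (x - c)), ⟨⟨hpos, mem_ball_iff_norm.1 hxR⟩, ?_⟩, ?_⟩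
      · simp [norm_smul, hpos.ne']
      · simp [smul_smul, hpos.ne']
    · rintro ⟨⟨t, u⟩, ⟨⟨ht0, htR⟩, hu⟩, rfl⟩
      have hu1 : ‖u‖ = 1 := by simpa using hu
      exact ⟨by simp [norm_smul, hu1, abs_of_pos ht0, htR],
        by simp [ht0.ne', ne_of_mem_sphere hu one_ne_zero]⟩
  rw [hpolar]
  exact (isPreconnected_Ioo.prod (isPreconnected_sphere h 0 1)).image _ (by fun_prop)

theorem sphere_subset_ball_diff_singleton {F : Type*} [NormedAddCommGroup F] {c : F} {r R : ℝ}
    (hr : 0 < r) (hrR : r < R) : sphere c r ⊆ ball c R \ {c} := fun _ hz ↦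
  ⟨sphere_subset_ball hrR hz, ne_of_mem_sphere hz hr.ne'⟩

theorem eqOn_ball_prod_ball_of_eqOn_diff_singleton {X F : Type*} [NormedAddCommGroup X]
    [NormedSpace ℝ X] [Nontrivial X] [TopologicalSpace F] [T2Space F] {f g : X × X → F}
    {c₁ c₂ : X} {r s : ℝ}
    (hf : ContinuousOn f (ball c₁ r ×ˢ ball c₂ s)) (hg : ContinuousOn g (ball c₁ r ×ˢ ball c₂ s))
    (h : EqOn f g ((ball c₁ r \ {c₁}) ×ˢ (ball c₂ s \ {c₂}))) :
    EqOn f g (ball c₁ r ×ˢ ball c₂ s) := by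
  refine h.of_subset_closure hf hg (prod_mono sdiff_subset sdiff_subset) ?_
  rw [closure_prod_eq, sdiff_eq, sdiff_eq]
  exact prod_mono ((dense_compl_singleton c₁).open_subset_closure_inter isOpen_ball)
    ((dense_compl_singleton c₂).open_subset_closure_inter isOpen_ball)

theorem mem_ball_zero_diff_zero_iff {F : Type*} [NormedAddCommGroup F] {z : F} {R : ℝ} :
    z ∈ ball (0 : F) R \ {0} ↔ 0 < ‖z‖ ∧ ‖z‖ < R := by
  simp [norm_pos_iff, and_comm]

theorem bddAbove_norm_pow_mul_of_le {𝕜 : Type*} [NormedDivisionRing 𝕜] {f : 𝕜 × 𝕜 → 𝕜}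
    {ζ : 𝕜} {T : Set 𝕜} {M : ℝ} (m : ℕ) (h : ∀ η ∈ T, ‖f (ζ, η)‖ ≤ M) :
    BddAbove ((fun η ↦ ‖ζ ^ m * f (ζ, η)‖) '' T) := by
  refine ⟨‖ζ‖ ^ m * M, forall_mem_image.2 fun η hη ↦ ?_⟩
  rw [norm_mul, norm_pow]
  gcongr
  exact h η hη

theorem bddAbove_norm_pow_mul_of_le_div {𝕜 : Type*} [NormedDivisionRing 𝕜] {f : 𝕜 × 𝕜 → 𝕜}
    {w : 𝕜} {T : Set 𝕜} {M : ℝ} {m : ℕ} (hT : (0 : 𝕜) ∉ T)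
    (h : ∀ ζ ∈ T, ‖f (ζ, w)‖ ≤ M / ‖ζ * w‖ ^ m) :
    BddAbove ((fun ζ ↦ ‖ζ ^ m * f (ζ, w)‖) '' T) := by
  refine ⟨M / ‖w‖ ^ m, forall_mem_image.2 fun ζ hζ ↦ ?_⟩
  have hζm : ‖ζ‖ ^ m ≠ 0 := pow_ne_zero _ (norm_ne_zero_iff.2 (ne_of_mem_of_not_mem hζ hT))
  calc ‖ζ ^ m * f (ζ, w)‖ ≤ ‖ζ‖ ^ m * (M / ‖ζ * w‖ ^ m) := by
        rw [norm_mul, norm_pow]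
        gcongr
        exact h ζ hζ
    _ = M / ‖w‖ ^ m := by rw [norm_mul, mul_pow, ← mul_div_assoc, mul_div_mul_left _ _ hζm]

section CauchyIntegral

variable {E : Type*} [NormedAddCommGroup E] [NormedSpace ℂ E]

theorem circleIntegral_circleIntegral_eq_setIntegral_prod {f : ℂ × ℂ → E} {c₁ c₂ : ℂ}
    {r s : ℝ} (hr : 0 ≤ r) (hs : 0 ≤ s) (hf : ContinuousOn f (sphere c₁ r ×ˢ sphere c₂ s)) :
    (∮ ζ in C(c₁, r), ∮ η in C(c₂, s), f (ζ, η)) =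
      ∫ θ in Icc 0 (2 * π) ×ˢ Icc 0 (2 * π),
        (deriv (circleMap c₁ r) θ.1 * deriv (circleMap c₂ s) θ.2) •
          f (circleMap c₁ r θ.1, circleMap c₂ s θ.2) := by
  have hcont : Continuous fun θ : ℝ × ℝ ↦
      (deriv (circleMap c₁ r) θ.1 * deriv (circleMap c₂ s) θ.2) •
        f (circleMap c₁ r θ.1, circleMap c₂ s θ.2) := by
    simp only [deriv_circleMap]
    exact Continuous.smul (by fun_prop) (hf.comp_continuous (by fun_prop) fun θ ↦
      ⟨circleMap_mem_sphere _ hr _, circleMap_mem_sphere _ hs _⟩)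
  rw [Measure.volume_eq_prod, setIntegral_prod _
    (hcont.continuousOn.integrableOn_compact (isCompact_Icc.prod isCompact_Icc))]
  simp only [circleIntegral_def_Icc, mul_smul, ← integral_smul]

noncomputable def cauchyIntegral (c : ℂ) (R : ℝ) (φ : ℂ → E) (z : ℂ) : E :=
  (2 * π * I : ℂ)⁻¹ • ∮ η in C(c, R), (η - z)⁻¹ • φ η

noncomputable def cauchyIntegral₂ (c₁ c₂ : ℂ) (r s : ℝ) (g : ℂ × ℂ → E) (p : ℂ × ℂ) : E :=
  cauchyIntegral c₁ r (fun ζ ↦ cauchyIntegral c₂ s (fun η ↦ g (ζ, η)) p.2) p.1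

theorem cauchyIntegral_congr {c : ℂ} {R : ℝ} (hR : 0 ≤ R) {φ ψ : ℂ → E}
    (h : EqOn φ ψ (sphere c R)) (z : ℂ) : cauchyIntegral c R φ z = cauchyIntegral c R ψ z := by
  rw [cauchyIntegral, cauchyIntegral, circleIntegral.integral_congr hR fun η hη ↦ by rw [h hη]]

theorem cauchyIntegral_eq_of_bddAbove [CompleteSpace E] {φ : ℂ → E} {c w : ℂ} {R s : ℝ}
    (hd : DifferentiableOn ℂ φ (ball c R \ {c})) (hb : BddAbove (norm ∘ φ '' (ball c R \ {c})))
    (hsR : s < R) (hw : w ∈ ball c s \ {c}) : cauchyIntegral c s φ w = φ w := by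
  have hs : 0 < s := dist_nonneg.trans_lt hw.1
  set u := update φ c (limUnder (𝓝[≠] c) φ)
  have hu : DifferentiableOn ℂ u (ball c R) :=
    differentiableOn_update_limUnder_of_bddAbove (ball_mem_nhds c (hs.trans hsR)) hd hb
  have hu_eq : ∀ {z}, z ≠ c → u z = φ z := fun hz ↦ update_of_ne hz _ _
  have hu_cl : DiffContOnCl ℂ u (ball c s) :=
    (hu.mono (closure_ball_subset_closedBall.trans (closedBall_subset_ball hsR))).diffContOnCl
  rw [cauchyIntegral_congr hs.le (fun z hz ↦ (hu_eq (ne_of_mem_sphere hz hs.ne')).symm),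
    cauchyIntegral, hu_cl.two_pi_i_inv_smul_circleIntegral_sub_inv_smul hw.1, hu_eq hw.2]

theorem differentiableOn_cauchyIntegral₂ {g : ℂ × ℂ → E} {c₁ c₂ : ℂ} {r s : ℝ}
    (hg : ContinuousOn g (sphere c₁ r ×ˢ sphere c₂ s)) :
    DifferentiableOn ℂ (cauchyIntegral₂ c₁ c₂ r s g) (ball c₁ r ×ˢ ball c₂ s) := by
  intro p₀ hp₀
  have hr : 0 ≤ r := dist_nonneg.trans (mem_ball.1 hp₀.1).le
  have hs : 0 ≤ s := dist_nonneg.trans (mem_ball.1 hp₀.2).le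
  set q : ℝ × ℝ → ℂ × ℂ := fun θ ↦ (circleMap c₁ r θ.1, circleMap c₂ s θ.2)
  have hq_mem : ∀ θ, q θ ∈ sphere c₁ r ×ˢ sphere c₂ s := fun θ ↦
    ⟨circleMap_mem_sphere _ hr _, circleMap_mem_sphere _ hs _⟩
  set G : ℝ × ℝ → E := fun θ ↦ (deriv (circleMap c₁ r) θ.1 * deriv (circleMap c₂ s) θ.2) • g (q θ)
  have hG : Continuous G := by
    simp only [G, deriv_circleMap]
    exact Continuous.smul (by fun_prop) (hg.comp_continuous (by fun_prop) hq_mem)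
  -- the Cauchy kernel `(ζ - z)⁻¹ (η - w)⁻¹` at `(ζ, η) = q θ` is `Φ (q θ - (z, w))`
  set Φ : ℂ × ℂ → ℂ := fun u ↦ u.1⁻¹ * u.2⁻¹
  have hΦ : ContDiffOn ℂ 1 Φ {u | u.1 ≠ 0 ∧ u.2 ≠ 0} :=
    (contDiffOn_fst.inv fun u hu ↦ hu.1).mul (contDiffOn_snd.inv fun u hu ↦ hu.2)
  have hsub_mem : ∀ u ∈ sphere c₁ r ×ˢ sphere c₂ s, ∀ p ∈ ball c₁ r ×ˢ ball c₂ s,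
      u - p ∈ {u : ℂ × ℂ | u.1 ≠ 0 ∧ u.2 ≠ 0} := fun u hu p hp ↦
    ⟨sub_ne_zero.2 (sphere_disjoint_ball.ne_of_mem hu.1 hp.1),
      sub_ne_zero.2 (sphere_disjoint_ball.ne_of_mem hu.2 hp.2)⟩
  refine ((differentiableOn_setIntegral_smul_of_contDiffOn (μ := volume)
    (s := Icc 0 (2 * π) ×ˢ Icc 0 (2 * π))
    ((isOpen_ne_fun continuous_fst continuous_const).inter
      (isOpen_ne_fun continuous_snd continuous_const)) hΦ (by fun_prop) hG
    (isOpen_ball.prod isOpen_ball) (isCompact_Icc.prod isCompact_Icc)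
    fun p hp θ _ ↦ hsub_mem _ (hq_mem θ) p hp).const_smul
    ((2 * π * I : ℂ)⁻¹ * (2 * π * I : ℂ)⁻¹)).congr (fun p hp ↦ ?_) p₀ hp₀
  have hf : ContinuousOn (fun u ↦ Φ (u - p) • g u) (sphere c₁ r ×ˢ sphere c₂ s) :=
    (hΦ.continuousOn.comp (continuousOn_id.sub continuousOn_const)
      fun u hu ↦ hsub_mem u hu p hp).smul hg
  simp only [Pi.smul_apply, G, smul_comm (Φ _)]
  rw [← circleIntegral_circleIntegral_eq_setIntegral_prod hr hs hf]
  simp only [cauchyIntegral₂, cauchyIntegral, Φ, Prod.fst_sub, Prod.snd_sub, mul_smul,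
    circleIntegral.integral_smul]
  congr 1
  rw [eq_comm, ← circleIntegral.integral_smul]
  congr 1
  funext ζ
  exact smul_comm _ _ _

theorem eqOn_ball_diff_singleton_of_eqOn_annulus [CompleteSpace E] {f g : ℂ → E} {c : ℂ}
    {ρ s : ℝ} (hρ : 0 ≤ ρ) (hρs : ρ < s)
    (hf : DifferentiableOn ℂ f (ball c s \ {c})) (hg : DifferentiableOn ℂ g (ball c s \ {c}))
    (h : EqOn f g {w | ρ < dist w c ∧ dist w c < s}) : EqOn f g (ball c s \ {c}) := by
  have hopen : IsOpen (ball c s \ {c}) := isOpen_ball.sdiff isClosed_singleton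
  obtain ⟨w₀, hw₀⟩ := (NormedSpace.sphere_nonempty (x := c)).2 (by linarith : 0 ≤ (ρ + s) / 2)
  have hw₀A : ρ < dist w₀ c ∧ dist w₀ c < s := by
    rw [mem_sphere] at hw₀
    constructor <;> linarith
  have hA_open : IsOpen {w | ρ < dist w c ∧ dist w c < s} :=
    (isOpen_lt continuous_const (continuous_id.dist continuous_const)).inter
      (isOpen_lt (continuous_id.dist continuous_const) continuous_const)
  exact (hf.analyticOnNhd hopen).eqOn_of_preconnected_of_eventuallyEq (hg.analyticOnNhd hopen)
    (isPreconnected_ball_diff_singleton (by simp [Complex.rank_real_complex]) c s)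
    ⟨hw₀A.2, dist_pos.1 (hρ.trans_lt hw₀A.1)⟩ (eventuallyEq_of_mem (hA_open.mem_nhds hw₀A) h)

theorem eqOn_cauchyIntegral₂_of_bddAbove [CompleteSpace E] {g : ℂ × ℂ → E} {c₁ c₂ : ℂ}
    {r s R S ρ : ℝ} (hrR : r < R) (hsS : s < S) (hρ : 0 ≤ ρ) (hρs : ρ < s)
    (hg : DifferentiableOn ℂ g ((ball c₁ R \ {c₁}) ×ˢ (ball c₂ S \ {c₂})))
    (hbd₁ : ∀ ζ ∈ sphere c₁ r, BddAbove ((fun η ↦ ‖g (ζ, η)‖) '' (ball c₂ S \ {c₂})))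
    (hbd₂ : ∀ w, ρ < dist w c₂ → dist w c₂ < s →
      BddAbove ((fun ζ ↦ ‖g (ζ, w)‖) '' (ball c₁ R \ {c₁}))) :
    EqOn (cauchyIntegral₂ c₁ c₂ r s g) g ((ball c₁ r \ {c₁}) ×ˢ (ball c₂ s \ {c₂})) := by
  rintro ⟨z, w⟩ ⟨hz, hw⟩
  have hr : 0 < r := (dist_pos.2 hz.2).trans hz.1
  have hs : 0 < s := (dist_pos.2 hw.2).trans hw.1
  have hslice₁ : ∀ w' ∈ ball c₂ S \ {c₂},
      DifferentiableOn ℂ (fun ζ ↦ g (ζ, w')) (ball c₁ R \ {c₁}) := fun w' hw' ↦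
    hg.comp (differentiableOn_id.prodMk (differentiableOn_const w')) fun ζ hζ ↦ ⟨hζ, hw'⟩
  have hslice₂ : ∀ ζ ∈ ball c₁ R \ {c₁},
      DifferentiableOn ℂ (fun η ↦ g (ζ, η)) (ball c₂ S \ {c₂}) := fun ζ hζ ↦
    hg.comp ((differentiableOn_const ζ).prodMk differentiableOn_id) fun η hη ↦ ⟨hζ, hη⟩
  have hsS' : ball c₂ s \ {c₂} ⊆ ball c₂ S \ {c₂} :=
    sdiff_subset_sdiff_left (ball_subset_ball hsS.le)
  have hF : DifferentiableOn ℂ (fun w' ↦ cauchyIntegral₂ c₁ c₂ r s g (z, w'))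
      (ball c₂ s \ {c₂}) :=
    (differentiableOn_cauchyIntegral₂ (hg.continuousOn.mono (prod_mono
      (sphere_subset_ball_diff_singleton hr hrR)
      (sphere_subset_ball_diff_singleton hs hsS)))).comp
      ((differentiableOn_const z).prodMk differentiableOn_id) fun w' hw' ↦ ⟨hz.1, hw'.1⟩
  refine eqOn_ball_diff_singleton_of_eqOn_annulus hρ hρs hF
    ((hslice₂ z ⟨ball_subset_ball hrR.le hz.1, hz.2⟩).mono hsS') (fun w' hw' ↦ ?_) hw
  have hw'' : w' ∈ ball c₂ s \ {c₂} := ⟨hw'.2, dist_pos.1 (hρ.trans_lt hw'.1)⟩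
  calc cauchyIntegral₂ c₁ c₂ r s g (z, w') = cauchyIntegral c₁ r (fun ζ ↦ g (ζ, w')) z :=
        cauchyIntegral_congr hr.le (fun ζ hζ ↦ cauchyIntegral_eq_of_bddAbove
          (hslice₂ ζ (sphere_subset_ball_diff_singleton hr hrR hζ)) (hbd₁ ζ hζ) hsS hw'') z
    _ = g (z, w') :=
        cauchyIntegral_eq_of_bddAbove (hslice₁ w' (hsS' hw'')) (hbd₂ w' hw'.1 hw'.2) hrR hz

end CauchyIntegral

theorem polar_growth_extension_general
    (c c' ρ₁ ρ₂ M : ℝ) (hc : 0 < c) (hc' : 0 < c')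
    (hρ₁ : 0 < ρ₁) (hρ : ρ₁ < ρ₂) (hρ₂ : ρ₂ < 1) (m : ℕ)
    (f : ℂ × ℂ → ℂ)
    (hf : DifferentiableOn ℂ f
      {p : ℂ × ℂ | 0 < ‖p.1‖ ∧ ‖p.1‖ < c ∧
        0 < ‖p.2‖ ∧ ‖p.2‖ < c'})
    (hband_z : ∀ p : ℂ × ℂ,
      (0 < ‖p.1‖ ∧ ‖p.1‖ < c ∧
        0 < ‖p.2‖ ∧ ‖p.2‖ < c') →
      ρ₁ * c ≤ ‖p.1‖ → ‖p.1‖ ≤ ρ₂ * c → ‖f p‖ ≤ M)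
    (hband_w : ∀ p : ℂ × ℂ,
      (0 < ‖p.1‖ ∧ ‖p.1‖ < c ∧
        0 < ‖p.2‖ ∧ ‖p.2‖ < c') →
      ρ₁ * c' ≤ ‖p.2‖ → ‖p.2‖ ≤ ρ₂ * c' →
      ‖f p‖ ≤ M / ‖p.1 * p.2‖ ^ m) :
    ∃ F : ℂ × ℂ → ℂ,
      (DifferentiableOn ℂ F
        {p : ℂ × ℂ | ‖p.1‖ < ρ₂ * c ∧ ‖p.2‖ < ρ₂ * c'} ∧
        ∀ p : ℂ × ℂ,
          (0 < ‖p.1‖ ∧ ‖p.1‖ < ρ₂ * c) →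
          (0 < ‖p.2‖ ∧ ‖p.2‖ < ρ₂ * c') →
          F p = p.1 ^ m * f p) ∧
      ∀ G : ℂ × ℂ → ℂ,
        (DifferentiableOn ℂ G
          {p : ℂ × ℂ | ‖p.1‖ < ρ₂ * c ∧ ‖p.2‖ < ρ₂ * c'} ∧
          ∀ p : ℂ × ℂ,
            (0 < ‖p.1‖ ∧ ‖p.1‖ < ρ₂ * c) →
            (0 < ‖p.2‖ ∧ ‖p.2‖ < ρ₂ * c') →
            G p = p.1 ^ m * f p) →
        ∀ p : ℂ × ℂ, ‖p.1‖ < ρ₂ * c → ‖p.2‖ < ρ₂ * c' → G p = F p := by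
  have hrc : ρ₂ * c < c := mul_lt_of_lt_one_left hc hρ₂
  have hsc' : ρ₂ * c' < c' := mul_lt_of_lt_one_left hc' hρ₂
  have hr : 0 < ρ₂ * c := mul_pos (hρ₁.trans hρ) hc
  have hs : 0 < ρ₂ * c' := mul_pos (hρ₁.trans hρ) hc'
  have hV : ∀ {p : ℂ × ℂ}, p ∈ (ball 0 c \ {0}) ×ˢ (ball 0 c' \ {0}) →
      0 < ‖p.1‖ ∧ ‖p.1‖ < c ∧ 0 < ‖p.2‖ ∧ ‖p.2‖ < c' := by
    simp only [mem_prod, mem_ball_zero_diff_zero_iff, and_assoc, imp_self, implies_true]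
  have hg : DifferentiableOn ℂ (fun p : ℂ × ℂ ↦ p.1 ^ m * f p)
      ((ball 0 c \ {0}) ×ˢ (ball 0 c' \ {0})) :=
    (differentiableOn_fst.pow m).mul (hf.mono fun _ ↦ hV)
  have hFg := eqOn_cauchyIntegral₂_of_bddAbove hrc hsc' (by positivity)
    (mul_lt_mul_of_pos_right hρ hc') hg
    (fun ζ hζ ↦ bddAbove_norm_pow_mul_of_le m fun η hη ↦ by
      have hζr : ‖ζ‖ = ρ₂ * c := mem_sphere_zero_iff_norm.1 hζ
      exact hband_z _ (hV ⟨sphere_subset_ball_diff_singleton hr hrc hζ, hη⟩)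
        (hζr ▸ mul_le_mul_of_nonneg_right hρ.le hc.le) hζr.le)
    (fun w hw₁ hw₂ ↦ bddAbove_norm_pow_mul_of_le_div (fun h ↦ h.2 rfl) fun ζ hζ ↦ by
      rw [dist_zero_right] at hw₁ hw₂
      exact hband_w _ (hV ⟨hζ, mem_ball_zero_diff_zero_iff.2
        ⟨(by positivity : 0 < ρ₁ * c').trans hw₁, hw₂.trans hsc'⟩⟩) hw₁.le hw₂.le)
  have hFd := differentiableOn_cauchyIntegral₂ (hg.continuousOn.mono (prod_mono
    (sphere_subset_ball_diff_singleton hr hrc) (sphere_subset_ball_diff_singleton hs hsc')))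
  have hdisc : {p : ℂ × ℂ | ‖p.1‖ < ρ₂ * c ∧ ‖p.2‖ < ρ₂ * c'} =
      ball 0 (ρ₂ * c) ×ˢ ball 0 (ρ₂ * c') := by
    ext; simp
  rw [hdisc]
  refine ⟨_, ⟨hFd, fun p hp₁ hp₂ ↦
    hFg ⟨mem_ball_zero_diff_zero_iff.2 hp₁, mem_ball_zero_diff_zero_iff.2 hp₂⟩⟩, ?_⟩
  rintro G ⟨hGd, hGg⟩ p hp₁ hp₂
  refine eqOn_ball_prod_ball_of_eqOn_diff_singleton hGd.continuousOn hFd.continuousOn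
    (fun q hq ↦ ?_) ⟨mem_ball_zero_iff.2 hp₁, mem_ball_zero_iff.2 hp₂⟩
  exact (hGg q (mem_ball_zero_diff_zero_iff.1 hq.1) (mem_ball_zero_diff_zero_iff.1 hq.2)).trans
    (hFg hq).symm

/-- Extension with polar growth: if `f` is holomorphic on
`V' = {0 < |z| < c, 0 < |w| < c'}`, bounded by `M` on the outer band
`{ρ₁c ≤ |z| ≤ ρ₂c}` and by `M·|zw|^{-m}` on the inner band `{ρ₁c' ≤ |w| ≤ ρ₂c'}`,
then `z^m · f(z,w)` extends uniquely to a holomorphic function on the polydisc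
`{|z| < ρ₂c, |w| < ρ₂c'}`. -/
theorem polar_growth_extension
    (c c' ρ₁ ρ₂ M : ℝ) (hc : 0 < c) (hc' : 0 < c')
    (hρ₁ : 0 < ρ₁) (hρ : ρ₁ < ρ₂) (hρ₂ : ρ₂ < 1) (hM : 0 < M) (m : ℕ)
    (f : ℂ × ℂ → ℂ)
    (hf : DifferentiableOn ℂ f
      {p : ℂ × ℂ | 0 < ‖p.1‖ ∧ ‖p.1‖ < c ∧
        0 < ‖p.2‖ ∧ ‖p.2‖ < c'})
    (hband_z : ∀ p : ℂ × ℂ,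
      (0 < ‖p.1‖ ∧ ‖p.1‖ < c ∧
        0 < ‖p.2‖ ∧ ‖p.2‖ < c') →
      ρ₁ * c ≤ ‖p.1‖ → ‖p.1‖ ≤ ρ₂ * c → ‖f p‖ ≤ M)
    (hband_w : ∀ p : ℂ × ℂ,
      (0 < ‖p.1‖ ∧ ‖p.1‖ < c ∧
        0 < ‖p.2‖ ∧ ‖p.2‖ < c') →
      ρ₁ * c' ≤ ‖p.2‖ → ‖p.2‖ ≤ ρ₂ * c' →
      ‖f p‖ ≤ M / ‖p.1 * p.2‖ ^ m) :
    ∃ F : ℂ × ℂ → ℂ,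
      (DifferentiableOn ℂ F
        {p : ℂ × ℂ | ‖p.1‖ < ρ₂ * c ∧ ‖p.2‖ < ρ₂ * c'} ∧
        ∀ p : ℂ × ℂ,
          (0 < ‖p.1‖ ∧ ‖p.1‖ < ρ₂ * c) →
          (0 < ‖p.2‖ ∧ ‖p.2‖ < ρ₂ * c') →
          F p = p.1 ^ m * f p) ∧
      ∀ G : ℂ × ℂ → ℂ,
        (DifferentiableOn ℂ G
          {p : ℂ × ℂ | ‖p.1‖ < ρ₂ * c ∧ ‖p.2‖ < ρ₂ * c'} ∧
          ∀ p : ℂ × ℂ,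
            (0 < ‖p.1‖ ∧ ‖p.1‖ < ρ₂ * c) →
            (0 < ‖p.2‖ ∧ ‖p.2‖ < ρ₂ * c') →
            G p = p.1 ^ m * f p) →
        ∀ p : ℂ × ℂ, ‖p.1‖ < ρ₂ * c → ‖p.2‖ < ρ₂ * c' → G p = F p :=
  polar_growth_extension_general c c' ρ₁ ρ₂ M hc hc' hρ₁ hρ hρ₂ m f hf hband_z hband_w
end
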